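/- arXiv:1001.5372 — 4 statements merged into one kernel-verified Lean document; each statement's English description precedes it below -/
import Mathlib

section
/- Hyperbolic Leibniz rule: suppose τ₀ + τ₁ + τ₂ = 0 in ℝ and ξ₀ + ξ₁ + ξ₂ = 0 in ℝⁿ, and let ±₁, ±₂ be the signs of τ₁, τ₂. Then ||τ₀| − |ξ₀|| ≤ C(|−τ₁ ±₁ |ξ₁|| + |−τ₂ ±₂ |ξ₂|| + 𝔟), where 𝔟 = |ξ₁| + |ξ₂| − |ξ₀| if the signs are equal, and 𝔟 = |ξ₀| − ||ξ₁| − |ξ₂|| if the signs are opposite, with C an absolute constant. -/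
lemma key_real (a b c τ₁ τ₂ : ℝ) (h1 : a ≤ b + c) (h2 : |b - c| ≤ a) :
    |(|τ₁ + τ₂| - a)| ≤
      |(-τ₁ + (if 0 ≤ τ₁ then b else -b))| +
      |(-τ₂ + (if 0 ≤ τ₂ then c else -c))| +
      (if (0 ≤ τ₁ ↔ 0 ≤ τ₂) then b + c - a else a - |b - c|) := by
  have h2' := abs_le.mp h2
  rw [abs_le]
  rcases le_or_gt 0 τ₁ with p1 | p1 <;> rcases le_or_gt 0 τ₂ with p2 | p2
  · rw [if_pos p1, if_pos p2, if_pos (iff_of_true p1 p2)]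
    have hA := le_abs_self (-τ₁ + b); have hA' := neg_abs_le (-τ₁ + b)
    have hB := le_abs_self (-τ₂ + c); have hB' := neg_abs_le (-τ₂ + c)
    rcases abs_cases (τ₁ + τ₂) with ⟨e1, e1'⟩ | ⟨e1, e1'⟩ <;> rw [e1] <;>
      constructor <;> linarith
  · rw [if_pos p1, if_neg (not_le.mpr p2),
      if_neg (by simp [p1, not_le.mpr p2] : ¬(0 ≤ τ₁ ↔ 0 ≤ τ₂))]
    have hA := le_abs_self (-τ₁ + b); have hA' := neg_abs_le (-τ₁ + b)
    have hB := le_abs_self (-τ₂ + -c); have hB' := neg_abs_le (-τ₂ + -c)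
    rcases abs_cases (τ₁ + τ₂) with ⟨e1, e1'⟩ | ⟨e1, e1'⟩ <;>
      rcases abs_cases (b - c) with ⟨e2, e2'⟩ | ⟨e2, e2'⟩ <;> rw [e1, e2] <;>
      constructor <;> linarith
  · rw [if_neg (not_le.mpr p1), if_pos p2,
      if_neg (by simp [p2, not_le.mpr p1] : ¬(0 ≤ τ₁ ↔ 0 ≤ τ₂))]
    have hA := le_abs_self (-τ₁ + -b); have hA' := neg_abs_le (-τ₁ + -b)
    have hB := le_abs_self (-τ₂ + c); have hB' := neg_abs_le (-τ₂ + c)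
    rcases abs_cases (τ₁ + τ₂) with ⟨e1, e1'⟩ | ⟨e1, e1'⟩ <;>
      rcases abs_cases (b - c) with ⟨e2, e2'⟩ | ⟨e2, e2'⟩ <;> rw [e1, e2] <;>
      constructor <;> linarith
  · rw [if_neg (not_le.mpr p1), if_neg (not_le.mpr p2),
      if_pos (iff_of_false (not_le.mpr p1) (not_le.mpr p2))]
    have hA := le_abs_self (-τ₁ + -b); have hA' := neg_abs_le (-τ₁ + -b)
    have hB := le_abs_self (-τ₂ + -c); have hB' := neg_abs_le (-τ₂ + -c)
    rcases abs_cases (τ₁ + τ₂) with ⟨e1, e1'⟩ | ⟨e1, e1'⟩ <;> rw [e1] <;>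
      constructor <;> linarith

/-- Hyperbolic Leibniz rule: if `τ₀ + τ₁ + τ₂ = 0` in `ℝ` and
`ξ₀ + ξ₁ + ξ₂ = 0` in `ℝⁿ`, and `±₁, ±₂` are the signs of `τ₁, τ₂`, then
`||τ₀| − |ξ₀|| ≤ C (|−τ₁ ±₁ |ξ₁|| + |−τ₂ ±₂ |ξ₂|| + 𝔟)`, where
`𝔟 = |ξ₁| + |ξ₂| − |ξ₀|` if the signs are equal and
`𝔟 = |ξ₀| − ||ξ₁| − |ξ₂||` if they are opposite, with `C` an absolute constant. -/
theorem hyperbolic_leibniz_rule :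
    ∃ C : ℝ, 0 < C ∧ ∀ (n : ℕ) (τ₀ τ₁ τ₂ : ℝ) (ξ₀ ξ₁ ξ₂ : EuclideanSpace ℝ (Fin n)),
      τ₀ + τ₁ + τ₂ = 0 → ξ₀ + ξ₁ + ξ₂ = 0 →
      |(|τ₀| - ‖ξ₀‖)| ≤ C *
        (|(-τ₁ + (if 0 ≤ τ₁ then ‖ξ₁‖ else -‖ξ₁‖))| +
         |(-τ₂ + (if 0 ≤ τ₂ then ‖ξ₂‖ else -‖ξ₂‖))| +
         (if (0 ≤ τ₁ ↔ 0 ≤ τ₂) then ‖ξ₁‖ + ‖ξ₂‖ - ‖ξ₀‖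
          else ‖ξ₀‖ - |‖ξ₁‖ - ‖ξ₂‖|)) := by
  refine ⟨1, one_pos, fun n τ₀ τ₁ τ₂ ξ₀ ξ₁ ξ₂ hτ hξ => ?_⟩
  have hξ0 : ξ₀ = -(ξ₁ + ξ₂) :=
    eq_neg_of_add_eq_zero_left (by rw [← add_assoc]; exact hξ)
  have hτ0 : |τ₀| = |τ₁ + τ₂| := by
    have : τ₀ = -(τ₁ + τ₂) := by linarith
    rw [this, abs_neg]
  have h1 : ‖ξ₀‖ ≤ ‖ξ₁‖ + ‖ξ₂‖ := by rw [hξ0, norm_neg]; exact norm_add_le _ _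
  have h2 : |‖ξ₁‖ - ‖ξ₂‖| ≤ ‖ξ₀‖ := by
    rw [hξ0, norm_neg]
    have := abs_norm_sub_norm_le ξ₁ (-ξ₂)
    simpa [sub_neg_eq_add] using this
  rw [one_mul, hτ0]
  exact key_real _ _ _ _ _ h1 h2
end

section
/- Modified summation lemma with square-root lower cutoff: Let A, B ∈ ℝ with B ≥ A, 2B ≥ A, and not both A = 0 and B = 0. Then for nonnegative dyadic sequences (a_N), (b_N), (c_N), the sum S = Σ (N₀^A / N₁^B) a_{N₀} b_{N₁} c_{N₂}, taken over dyadic triples with N₁^{1/2} ≤ N₀ ≤ N₁ and N₁ ∼ N₂, is bounded by C (Σ a²)^{1/2}(Σ b²)^{1/2}(Σ c²)^{1/2}. The key step is Ξ_A(N) := Σ_{N^{1/2} ≤ M ≤ N} M^A ≲ N^B under the stated hypotheses. -/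
open Finset

private lemma sum_ab_le_aux (a b : ℕ → ℝ) (ha : ∀ j, 0 ≤ a j) (hb : ∀ j, 0 ≤ b j)
    (hsa : Summable fun j => a j ^ 2) (hsb : Summable fun j => b j ^ 2)
    (τ : ℕ → ℕ) (J : Finset ℕ) (hτ : ∀ j ∈ J, ∀ j' ∈ J, τ j = τ j' → j = j') :
    ∑ j ∈ J, a j * b (τ j) ≤ Real.sqrt (∑' j, a j ^ 2) * Real.sqrt (∑' j, b j ^ 2) := by
  classical
  have hX0 : 0 ≤ ∑ j ∈ J, a j * b (τ j) :=
    Finset.sum_nonneg fun j _ => mul_nonneg (ha j) (hb _)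
  have hcs := Finset.sum_mul_sq_le_sq_mul_sq J a (fun j => b (τ j))
  have hSa0 : (0:ℝ) ≤ ∑' j, a j ^ 2 := tsum_nonneg fun _ => sq_nonneg _
  have hA : ∑ j ∈ J, a j ^ 2 ≤ ∑' j, a j ^ 2 := Summable.sum_le_tsum J (fun j _ => sq_nonneg _) hsa
  have hB : ∑ j ∈ J, b (τ j) ^ 2 ≤ ∑' j, b j ^ 2 := by
    have himg : ∑ k ∈ J.image τ, b k ^ 2 = ∑ j ∈ J, b (τ j) ^ 2 :=
      Finset.sum_image (f := fun k => b k ^ 2) hτ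
    rw [← himg]
    exact Summable.sum_le_tsum _ (fun j _ => sq_nonneg _) hsb
  calc ∑ j ∈ J, a j * b (τ j) = Real.sqrt ((∑ j ∈ J, a j * b (τ j)) ^ 2) :=
        (Real.sqrt_sq hX0).symm
    _ ≤ Real.sqrt ((∑' j, a j ^ 2) * (∑' j, b j ^ 2)) := by
        refine Real.sqrt_le_sqrt (le_trans hcs ?_)
        exact mul_le_mul hA hB (Finset.sum_nonneg fun j _ => sq_nonneg _) hSa0
    _ = _ := Real.sqrt_mul hSa0 _

private lemma aux_tsum (A B : ℝ) (r : ℝ) (hr0 : 0 < r) (hr1 : r < 1)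
    (σ υ : ℕ → ℕ → ℕ)
    (hσ1 : ∀ j₀ j₁ : ℕ, j₀ ≤ j₁ → j₁ ≤ 2 * j₀ → σ (υ j₀ j₁) j₀ = j₁)
    (hσ2 : ∀ j₀ j₁ : ℕ, j₀ ≤ j₁ → j₁ ≤ 2 * j₀ → υ j₀ j₁ ≤ j₀)
    (hinj : ∀ u j j' : ℕ, u ≤ j → u ≤ j' → σ u j = σ u j' → j = j')
    (hw : ∀ j₀ j₁ : ℕ, j₀ ≤ j₁ → j₁ ≤ 2 * j₀ →
      ((2:ℝ) ^ j₀) ^ A / ((2:ℝ) ^ j₁) ^ B ≤ r ^ υ j₀ j₁)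
    (a b c : ℕ → ℝ) (ha : ∀ j, 0 ≤ a j) (hb : ∀ j, 0 ≤ b j) (hc : ∀ j, 0 ≤ c j)
    (hsa : Summable fun j => a j ^ 2) (hsb : Summable fun j => b j ^ 2)
    (hsc : Summable fun j => c j ^ 2) :
    (∑' q : ℕ × ℕ × ℕ,
        if ((2 : ℝ) ^ q.2.1) ^ (1/2 : ℝ) ≤ (2 : ℝ) ^ q.1 ∧ q.1 ≤ q.2.1 ∧
            q.2.1 ≤ q.2.2 + 1 ∧ q.2.2 ≤ q.2.1 + 1 then
          ((2 : ℝ) ^ q.1) ^ A / ((2 : ℝ) ^ q.2.1) ^ B * a q.1 * b q.2.1 * c q.2.2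
        else 0)
      ≤ 3 * (1 - r)⁻¹ * (Real.sqrt (∑' j, a j ^ 2) *
          (Real.sqrt (∑' j, b j ^ 2) * Real.sqrt (∑' j, c j ^ 2))) := by
  classical
  have h1r : 0 < 1 - r := by linarith
  set Na := Real.sqrt (∑' j, a j ^ 2) with hNa
  set Nb := Real.sqrt (∑' j, b j ^ 2) with hNb
  set Nc := Real.sqrt (∑' j, c j ^ 2) with hNc
  have hNa0 : 0 ≤ Na := Real.sqrt_nonneg _
  have hNb0 : 0 ≤ Nb := Real.sqrt_nonneg _
  have hNc0 : 0 ≤ Nc := Real.sqrt_nonneg _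
  have hcond : ∀ j₀ j₁ : ℕ, (((2:ℝ) ^ j₁) ^ (1/2 : ℝ) ≤ (2:ℝ) ^ j₀) ↔ j₁ ≤ 2 * j₀ := by
    intro j₀ j₁
    rw [show ((2:ℝ) ^ j₁ : ℝ) = (2:ℝ) ^ (j₁:ℝ) from (Real.rpow_natCast 2 j₁).symm,
      show ((2:ℝ) ^ j₀ : ℝ) = (2:ℝ) ^ (j₀:ℝ) from (Real.rpow_natCast 2 j₀).symm,
      ← Real.rpow_mul (by norm_num : (0:ℝ) ≤ 2),
      Real.rpow_le_rpow_left_iff (by norm_num : (1:ℝ) < 2)]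
    constructor
    · intro h
      have h' : (j₁:ℝ) ≤ 2 * (j₀:ℝ) := by linarith
      exact_mod_cast h'
    · intro h
      have h' : (j₁:ℝ) ≤ 2 * (j₀:ℝ) := by exact_mod_cast h
      linarith
  have hcle : ∀ k, c k ≤ Nc := by
    intro k
    have h1 : c k ^ 2 ≤ ∑' j, c j ^ 2 := Summable.le_tsum hsc k fun j _ => sq_nonneg _
    calc c k = Real.sqrt (c k ^ 2) := (Real.sqrt_sq (hc k)).symm
      _ ≤ Nc := Real.sqrt_le_sqrt h1
  refine tsum_le_of_sum_le' (mul_nonneg (mul_nonneg (by norm_num) (inv_nonneg.2 h1r.le))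
    (mul_nonneg hNa0 (mul_nonneg hNb0 hNc0))) ?_
  intro s
  set π : ℕ × ℕ × ℕ → ℕ × ℕ × ℕ := fun q => (υ q.1 q.2.1, q.2.2 + 1 - q.2.1, q.1) with hπ
  set G : ℕ × ℕ × ℕ → ℝ :=
    fun p => if p.1 ≤ p.2.2 then r ^ p.1 * a p.2.2 * b (σ p.1 p.2.2) * Nc else 0 with hG
  have hG0 : ∀ p, 0 ≤ G p := by
    intro p
    rw [hG]
    dsimp only
    split
    · exact mul_nonneg (mul_nonneg (mul_nonneg (pow_nonneg hr0.le _) (ha _)) (hb _)) hNc0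
    · exact le_refl 0
  set t := s.filter (fun q : ℕ × ℕ × ℕ => ((2 : ℝ) ^ q.2.1) ^ (1/2 : ℝ) ≤ (2 : ℝ) ^ q.1 ∧
    q.1 ≤ q.2.1 ∧ q.2.1 ≤ q.2.2 + 1 ∧ q.2.2 ≤ q.2.1 + 1) with htdef
  have hmem : ∀ q ∈ t, q.1 ≤ q.2.1 ∧ q.2.1 ≤ 2 * q.1 ∧ q.2.1 ≤ q.2.2 + 1 ∧
      q.2.2 ≤ q.2.1 + 1 := by
    intro q hq
    obtain ⟨-, h1, h2, h3, h4⟩ := Finset.mem_filter.1 hq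
    exact ⟨h2, (hcond _ _).1 h1, h3, h4⟩
  have hπinj : ∀ q ∈ t, ∀ q' ∈ t, π q = π q' → q = q' := by
    intro q hq q' hq' he
    obtain ⟨h01, h21, h12a, h12b⟩ := hmem q hq
    obtain ⟨h01', h21', h12a', h12b'⟩ := hmem q' hq'
    rw [hπ] at he
    simp only [Prod.mk.injEq] at he
    obtain ⟨e1, e2, e3⟩ := he
    have k1 := hσ1 q.1 q.2.1 h01 h21
    have k2 := hσ1 q'.1 q'.2.1 h01' h21'
    have e21 : q.2.1 = q'.2.1 := by rw [← k1, ← k2, e1, e3]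
    have e22 : q.2.2 = q'.2.2 := by omega
    exact Prod.ext e3 (Prod.ext e21 e22)
  set U := (t.image π).image Prod.fst with hU
  set J := (t.image π).image (fun p : ℕ × ℕ × ℕ => p.2.2) with hJ
  have stepF : ∀ u m : ℕ, (∑ j ∈ J, G (u, m, j)) ≤ r ^ u * Nc * (Na * Nb) := by
    intro u m
    have h1 : (∑ j ∈ J, G (u, m, j)) =
        ∑ j ∈ J.filter (fun j => u ≤ j), r ^ u * a j * b (σ u j) * Nc := by
      rw [Finset.sum_filter]
    rw [h1]
    have h2 : ∑ j ∈ J.filter (fun j => u ≤ j), r ^ u * a j * b (σ u j) * Nc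
        = (r ^ u * Nc) * ∑ j ∈ J.filter (fun j => u ≤ j), a j * b (σ u j) := by
      rw [Finset.mul_sum]
      exact Finset.sum_congr rfl fun j _ => by ring
    rw [h2]
    have h3 : ∑ j ∈ J.filter (fun j => u ≤ j), a j * b (σ u j) ≤ Na * Nb :=
      sum_ab_le_aux a b ha hb hsa hsb (σ u) _ (fun j hj j' hj' he =>
        hinj u j j' (Finset.mem_filter.1 hj).2 (Finset.mem_filter.1 hj').2 he)
    calc (r ^ u * Nc) * ∑ j ∈ J.filter (fun j => u ≤ j), a j * b (σ u j)
        ≤ (r ^ u * Nc) * (Na * Nb) :=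
          mul_le_mul_of_nonneg_left h3 (mul_nonneg (pow_nonneg hr0.le u) hNc0)
      _ = r ^ u * Nc * (Na * Nb) := by ring
  have hgeo : ∑ u ∈ U, r ^ u ≤ (1 - r)⁻¹ := by
    have hs : Summable (fun u : ℕ => r ^ u) := summable_geometric_of_lt_one hr0.le hr1
    calc ∑ u ∈ U, r ^ u ≤ ∑' u : ℕ, r ^ u :=
          Summable.sum_le_tsum U (fun u _ => pow_nonneg hr0.le u) hs
      _ = (1 - r)⁻¹ := tsum_geometric_of_lt_one hr0.le hr1
  calc (∑ q ∈ s,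
        if ((2 : ℝ) ^ q.2.1) ^ (1/2 : ℝ) ≤ (2 : ℝ) ^ q.1 ∧ q.1 ≤ q.2.1 ∧
            q.2.1 ≤ q.2.2 + 1 ∧ q.2.2 ≤ q.2.1 + 1 then
          ((2 : ℝ) ^ q.1) ^ A / ((2 : ℝ) ^ q.2.1) ^ B * a q.1 * b q.2.1 * c q.2.2
        else 0)
      = ∑ q ∈ t,
        (if ((2 : ℝ) ^ q.2.1) ^ (1/2 : ℝ) ≤ (2 : ℝ) ^ q.1 ∧ q.1 ≤ q.2.1 ∧
            q.2.1 ≤ q.2.2 + 1 ∧ q.2.2 ≤ q.2.1 + 1 then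
          ((2 : ℝ) ^ q.1) ^ A / ((2 : ℝ) ^ q.2.1) ^ B * a q.1 * b q.2.1 * c q.2.2
        else 0) := by
        rw [htdef]
        exact (Finset.sum_filter_of_ne (fun q _ hne => by
          by_contra hcon
          exact hne (if_neg hcon))).symm
    _ ≤ ∑ q ∈ t, G (π q) := by
        refine Finset.sum_le_sum ?_
        intro q hq
        obtain ⟨h01, h21, h12a, h12b⟩ := hmem q hq
        obtain ⟨-, hcnd⟩ := Finset.mem_filter.1 hq
        rw [if_pos hcnd, hG, hπ]
        dsimp only
        rw [if_pos (hσ2 _ _ h01 h21), hσ1 _ _ h01 h21]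
        have h1 := hw _ _ h01 h21
        have h2 := hcle q.2.2
        have hr' : 0 ≤ r ^ υ q.1 q.2.1 := pow_nonneg hr0.le _
        calc ((2:ℝ) ^ q.1) ^ A / ((2:ℝ) ^ q.2.1) ^ B * a q.1 * b q.2.1 * c q.2.2
            ≤ r ^ υ q.1 q.2.1 * a q.1 * b q.2.1 * c q.2.2 :=
              mul_le_mul_of_nonneg_right (mul_le_mul_of_nonneg_right
                (mul_le_mul_of_nonneg_right h1 (ha _)) (hb _)) (hc _)
          _ ≤ r ^ υ q.1 q.2.1 * a q.1 * b q.2.1 * Nc :=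
              mul_le_mul_of_nonneg_left h2 (mul_nonneg (mul_nonneg hr' (ha _)) (hb _))
    _ = ∑ p ∈ t.image π, G p := (Finset.sum_image hπinj).symm
    _ ≤ ∑ p ∈ U ×ˢ (({0, 1, 2} : Finset ℕ) ×ˢ J), G p := by
        refine Finset.sum_le_sum_of_subset_of_nonneg ?_ (fun p _ _ => hG0 p)
        intro p hp
        obtain ⟨q, hq, hpq⟩ := Finset.mem_image.1 hp
        obtain ⟨h01, h21, h12a, h12b⟩ := hmem q hq
        refine Finset.mem_product.2 ⟨Finset.mem_image_of_mem _ hp,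
          Finset.mem_product.2 ⟨?_, Finset.mem_image_of_mem _ hp⟩⟩
        have hm : p.2.1 = q.2.2 + 1 - q.2.1 := by rw [← hpq]
        simp only [Finset.mem_insert, Finset.mem_singleton]
        omega
    _ = ∑ u ∈ U, ∑ m ∈ ({0, 1, 2} : Finset ℕ), ∑ j ∈ J, G (u, m, j) := by
        rw [Finset.sum_product]
        refine Finset.sum_congr rfl fun u _ => ?_
        rw [Finset.sum_product]
    _ ≤ ∑ u ∈ U, ∑ m ∈ ({0, 1, 2} : Finset ℕ), r ^ u * Nc * (Na * Nb) :=
        Finset.sum_le_sum fun u _ => Finset.sum_le_sum fun m _ => stepF u m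
    _ = ∑ u ∈ U, 3 * (r ^ u * Nc * (Na * Nb)) := by
        refine Finset.sum_congr rfl fun u _ => ?_
        rw [Finset.sum_const]
        norm_num
    _ = 3 * (Nc * (Na * Nb)) * ∑ u ∈ U, r ^ u := by
        rw [Finset.mul_sum]
        exact Finset.sum_congr rfl fun u _ => by ring
    _ ≤ 3 * (Nc * (Na * Nb)) * (1 - r)⁻¹ := by
        refine mul_le_mul_of_nonneg_left hgeo ?_
        exact mul_nonneg (by norm_num) (mul_nonneg hNc0 (mul_nonneg hNa0 hNb0))
    _ = 3 * (1 - r)⁻¹ * (Na * (Nb * Nc)) := by ring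

/-- Modified summation lemma with square-root lower cutoff: for
`B ≥ A`, `2B ≥ A`, not both zero, the dyadic sum `S = Σ (N₀^A / N₁^B) a b c` over
triples with `N₁^{1/2} ≤ N₀ ≤ N₁` and `N₁ ∼ N₂` is bounded by
`C (Σ a²)^{1/2} (Σ b²)^{1/2} (Σ c²)^{1/2}`. -/
theorem dyadic_summation_lemma_sqrt_cutoff (A B : ℝ) (hBA : A ≤ B) (h2B : A ≤ 2 * B)
    (hAB : ¬(A = 0 ∧ B = 0)) :
    ∃ C : ℝ, 0 < C ∧ ∀ a b c : ℕ → ℝ,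
      (∀ j, 0 ≤ a j) → (∀ j, 0 ≤ b j) → (∀ j, 0 ≤ c j) →
      Summable (fun j => a j ^ 2) → Summable (fun j => b j ^ 2) →
      Summable (fun j => c j ^ 2) →
      (∑' q : ℕ × ℕ × ℕ,
          if ((2 : ℝ) ^ q.2.1) ^ (1/2 : ℝ) ≤ (2 : ℝ) ^ q.1 ∧ q.1 ≤ q.2.1 ∧
              q.2.1 ≤ q.2.2 + 1 ∧ q.2.2 ≤ q.2.1 + 1 then
            ((2 : ℝ) ^ q.1) ^ A / ((2 : ℝ) ^ q.2.1) ^ B * a q.1 * b q.2.1 * c q.2.2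
          else 0)
        ≤ C * (∑' j, a j ^ 2) ^ (1/2 : ℝ) * (∑' j, b j ^ 2) ^ (1/2 : ℝ) *
            (∑' j, c j ^ 2) ^ (1/2 : ℝ) := by
  have h2pos : (0:ℝ) < 2 := by norm_num
  rcases lt_or_eq_of_le h2B with hlt | heq
  · -- Case A < 2B
    set r : ℝ := (2:ℝ) ^ (A - 2 * B) with hrdef
    have hr0 : 0 < r := Real.rpow_pos_of_pos h2pos _
    have hr1 : r < 1 := Real.rpow_lt_one_of_one_lt_of_neg (by norm_num) (by linarith)
    refine ⟨3 * (1 - r)⁻¹, mul_pos (by norm_num) (inv_pos.2 (by linarith)), ?_⟩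
    intro a b c ha hb hc hsa hsb hsc
    have hw : ∀ j₀ j₁ : ℕ, j₀ ≤ j₁ → j₁ ≤ 2 * j₀ →
        ((2:ℝ) ^ j₀) ^ A / ((2:ℝ) ^ j₁) ^ B ≤ r ^ (j₁ - j₀) := by
      intro j₀ j₁ h01 h21
      have e1 : ((2:ℝ) ^ j₀ : ℝ) ^ A = (2:ℝ) ^ ((j₀:ℝ) * A) := by
        rw [← Real.rpow_natCast 2 j₀, ← Real.rpow_mul (by norm_num)]
      have e2 : ((2:ℝ) ^ j₁ : ℝ) ^ B = (2:ℝ) ^ ((j₁:ℝ) * B) := by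
        rw [← Real.rpow_natCast 2 j₁, ← Real.rpow_mul (by norm_num)]
      have e3 : r ^ (j₁ - j₀) = (2:ℝ) ^ ((A - 2 * B) * ((j₁ - j₀ : ℕ) : ℝ)) := by
        rw [hrdef, ← Real.rpow_natCast ((2:ℝ) ^ (A - 2 * B)) (j₁ - j₀),
          ← Real.rpow_mul (by norm_num)]
      rw [e1, e2, e3, ← Real.rpow_sub h2pos,
        Real.rpow_le_rpow_left_iff (by norm_num : (1:ℝ) < 2)]
      have hcast : ((j₁ - j₀ : ℕ) : ℝ) = (j₁:ℝ) - (j₀:ℝ) := by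
        push_cast [h01]
        ring
      have hc21 : (j₁:ℝ) ≤ 2 * (j₀:ℝ) := by exact_mod_cast h21
      rw [hcast]
      nlinarith [mul_nonneg (sub_nonneg.2 hBA) (sub_nonneg.2 hc21)]
    have key := aux_tsum A B r hr0 hr1 (fun u j => j + u) (fun j₀ j₁ => j₁ - j₀)
      (by intro j₀ j₁ h1 h2; show j₀ + (j₁ - j₀) = j₁; omega)
      (by intro j₀ j₁ h1 h2; show j₁ - j₀ ≤ j₀; omega)
      (by intro u j j' h1 h2 h3; have : j + u = j' + u := h3; omega)
      hw a b c ha hb hc hsa hsb hsc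
    calc _ ≤ _ := key
      _ = 3 * (1 - r)⁻¹ * (∑' j, a j ^ 2) ^ (1/2 : ℝ) * (∑' j, b j ^ 2) ^ (1/2 : ℝ) *
            (∑' j, c j ^ 2) ^ (1/2 : ℝ) := by
          rw [← Real.sqrt_eq_rpow, ← Real.sqrt_eq_rpow, ← Real.sqrt_eq_rpow]
          ring
  · -- Case A = 2B
    have hBne : B ≠ 0 := by
      intro hB0
      exact hAB ⟨by rw [heq, hB0]; ring, hB0⟩
    have hBneg : B < 0 := by
      have h1 : 2 * B ≤ B := by rw [← heq]; exact hBA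
      rcases lt_or_eq_of_le (by linarith : B ≤ 0) with h | h
      · exact h
      · exact absurd h hBne
    set r : ℝ := (2:ℝ) ^ B with hrdef
    have hr0 : 0 < r := Real.rpow_pos_of_pos h2pos _
    have hr1 : r < 1 := Real.rpow_lt_one_of_one_lt_of_neg (by norm_num) hBneg
    refine ⟨3 * (1 - r)⁻¹, mul_pos (by norm_num) (inv_pos.2 (by linarith)), ?_⟩
    intro a b c ha hb hc hsa hsb hsc
    have hw : ∀ j₀ j₁ : ℕ, j₀ ≤ j₁ → j₁ ≤ 2 * j₀ →
        ((2:ℝ) ^ j₀) ^ A / ((2:ℝ) ^ j₁) ^ B ≤ r ^ (2 * j₀ - j₁) := by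
      intro j₀ j₁ h01 h21
      have e1 : ((2:ℝ) ^ j₀ : ℝ) ^ A = (2:ℝ) ^ ((j₀:ℝ) * A) := by
        rw [← Real.rpow_natCast 2 j₀, ← Real.rpow_mul (by norm_num)]
      have e2 : ((2:ℝ) ^ j₁ : ℝ) ^ B = (2:ℝ) ^ ((j₁:ℝ) * B) := by
        rw [← Real.rpow_natCast 2 j₁, ← Real.rpow_mul (by norm_num)]
      have e3 : r ^ (2 * j₀ - j₁) = (2:ℝ) ^ (B * ((2 * j₀ - j₁ : ℕ) : ℝ)) := by
        rw [hrdef, ← Real.rpow_natCast ((2:ℝ) ^ B) (2 * j₀ - j₁),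
          ← Real.rpow_mul (by norm_num)]
      rw [e1, e2, e3, ← Real.rpow_sub h2pos,
        Real.rpow_le_rpow_left_iff (by norm_num : (1:ℝ) < 2)]
      have hcast : ((2 * j₀ - j₁ : ℕ) : ℝ) = 2 * (j₀:ℝ) - (j₁:ℝ) := by
        push_cast [h21]
        ring
      rw [hcast]
      have : A = 2 * B := heq
      nlinarith [this]
    have key := aux_tsum A B r hr0 hr1 (fun u j => 2 * j - u) (fun j₀ j₁ => 2 * j₀ - j₁)
      (by intro j₀ j₁ h1 h2; show 2 * j₀ - (2 * j₀ - j₁) = j₁; omega)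
      (by intro j₀ j₁ h1 h2; show 2 * j₀ - j₁ ≤ j₀; omega)
      (by intro u j j' h1 h2 h3; have : 2 * j - u = 2 * j' - u := h3; omega)
      hw a b c ha hb hc hsa hsb hsc
    calc _ ≤ _ := key
      _ = 3 * (1 - r)⁻¹ * (∑' j, a j ^ 2) ^ (1/2 : ℝ) * (∑' j, b j ^ 2) ^ (1/2 : ℝ) *
            (∑' j, c j ^ 2) ^ (1/2 : ℝ) := by
          rw [← Real.sqrt_eq_rpow, ← Real.sqrt_eq_rpow, ← Real.sqrt_eq_rpow]
          ring
end

section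
/- Necessity of the full-scaling condition: If the product estimate ‖uv‖_{H^{−s₀,−b₀}} ≤ C‖u‖_{H^{s₁,b₁}}‖v‖_{H^{s₂,b₂}} holds on ℝ^{1+n} for all Schwartz functions, then s₀ + s₁ + s₂ + b₀ + b₁ + b₂ ≥ (n+1)/2. -/
open MeasureTheory
open scoped FourierTransform

/-- The spatial frequency magnitude `|ξ|` of a space-time frequency point
`X = (τ, ξ) ∈ ℝ^{1+n}`, where `τ = X 0` and `ξ = (X 1, …, X n)`. -/
noncomputable def spatialNorm {n : ℕ} (X : EuclideanSpace ℝ (Fin (n + 1))) : ℝ :=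
  Real.sqrt (∑ i : Fin n, X i.succ ^ 2)

/-- The squared integrand weight of the wave-Sobolev `H^{s,b}` norm:
`⟨ξ⟩^{2s} ⟨|τ|−|ξ|⟩^{2b} = (1+|ξ|²)^s (1+(|τ|−|ξ|)²)^b`. -/
noncomputable def waveWeight {n : ℕ} (s b : ℝ) (X : EuclideanSpace ℝ (Fin (n + 1))) : ℝ :=
  (1 + spatialNorm X ^ 2) ^ s * (1 + (|X 0| - spatialNorm X) ^ 2) ^ b

/-- The wave-Sobolev norm `‖u‖_{H^{s,b}} = ‖⟨ξ⟩^s ⟨|τ|−|ξ|⟩^b ũ(τ,ξ)‖_{L²}` on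
`ℝ^{1+n}`, where `ũ = 𝓕 u` is the space-time Fourier transform. -/
noncomputable def waveSobolevNorm (n : ℕ) (s b : ℝ)
    (u : EuclideanSpace ℝ (Fin (n + 1)) → ℂ) : ℝ :=
  (∫ X : EuclideanSpace ℝ (Fin (n + 1)), waveWeight s b X * ‖𝓕 u X‖ ^ 2) ^ (1/2 : ℝ)

/-! ### Auxiliary lemmas -/

open Metric SchwartzMap
open scoped RealInnerProductSpace

namespace WaveAux

variable {n : ℕ}

/-- projection dropping the time coordinate -/
def sproj (X : EuclideanSpace ℝ (Fin (n + 1))) : EuclideanSpace ℝ (Fin n) :=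
  WithLp.toLp 2 (fun i => X i.succ)

lemma sproj_sub (X Y : EuclideanSpace ℝ (Fin (n+1))) : sproj (X - Y) = sproj X - sproj Y := by
  ext i
  simp [sproj, PiLp.sub_apply]

lemma spatialNorm_eq (X : EuclideanSpace ℝ (Fin (n+1))) : spatialNorm X = ‖sproj X‖ := by
  rw [EuclideanSpace.norm_eq]
  simp [sproj, Real.norm_eq_abs, sq_abs, spatialNorm]

lemma norm_sproj_le (X : EuclideanSpace ℝ (Fin (n+1))) : ‖sproj X‖ ≤ ‖X‖ := by
  rw [EuclideanSpace.norm_eq, EuclideanSpace.norm_eq]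
  apply Real.sqrt_le_sqrt
  rw [Fin.sum_univ_succ]
  simp only [sproj, PiLp.toLp_apply]
  nlinarith [sq_nonneg ‖X 0‖,
    Finset.sum_nonneg (fun i (_ : i ∈ Finset.univ) => sq_nonneg ‖X (Fin.succ i)‖)]

lemma abs_coord_le_norm (X : EuclideanSpace ℝ (Fin (n+1))) (j : Fin (n+1)) : |X j| ≤ ‖X‖ := by
  rw [EuclideanSpace.norm_eq]
  rw [← Real.sqrt_sq_eq_abs]
  apply Real.sqrt_le_sqrt
  have : (X j)^2 ≤ ∑ i, ‖X i‖^2 := by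
    have := Finset.single_le_sum (f := fun i => ‖X i‖^2) (fun i _ => by positivity)
      (Finset.mem_univ j)
    simpa [Real.norm_eq_abs, sq_abs] using this
  simpa using this

lemma spatialNorm_nonneg (X : EuclideanSpace ℝ (Fin (n+1))) : 0 ≤ spatialNorm X :=
  Real.sqrt_nonneg _

lemma spat_triangle (X Y : EuclideanSpace ℝ (Fin (n+1))) :
    spatialNorm X ≤ spatialNorm Y + ‖X - Y‖ := by
  rw [spatialNorm_eq, spatialNorm_eq]
  calc ‖sproj X‖ = ‖sproj Y + (sproj X - sproj Y)‖ := by rw [add_sub_cancel]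
  _ ≤ ‖sproj Y‖ + ‖sproj X - sproj Y‖ := norm_add_le _ _
  _ = ‖sproj Y‖ + ‖sproj (X - Y)‖ := by rw [sproj_sub]
  _ ≤ ‖sproj Y‖ + ‖X - Y‖ := add_le_add le_rfl (norm_sproj_le _)

lemma spat_single (j : Fin (n+1)) (hj : j ≠ 0) (t : ℝ) :
    spatialNorm (EuclideanSpace.single j t) = |t| := by
  unfold spatialNorm
  have key : ∀ i : Fin n, (EuclideanSpace.single j t) i.succ ^ 2
      = if i = Fin.pred j hj then t^2 else 0 := by
    intro i
    rw [EuclideanSpace.single_apply]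
    by_cases hij : i = Fin.pred j hj
    · subst hij; rw [Fin.succ_pred]; simp
    · have : i.succ ≠ j := by
        intro hcon
        apply hij
        apply Fin.succ_injective
        rw [Fin.succ_pred, hcon]
      simp [this, hij]
  simp only [key]
  rw [Finset.sum_ite_eq' Finset.univ (Fin.pred j hj) (fun _ => t^2)]
  simp [Real.sqrt_sq_eq_abs]

lemma single_zero_coord (j : Fin (n+1)) (hj : j ≠ 0) (t : ℝ) :
    (EuclideanSpace.single j t) 0 = 0 := by
  rw [EuclideanSpace.single_apply]
  simp [Ne.symm hj]

lemma rpow_upper {t lam : ℝ} (s : ℝ) (hlam : 1 ≤ lam) (h1 : lam^2/4 ≤ t) (h2 : t ≤ 17*lam^2) :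
    t ^ s ≤ 68 ^ |s| * lam ^ (2*s) := by
  have hl0 : (0:ℝ) < lam := lt_of_lt_of_le one_pos hlam
  have hl2 : (0:ℝ) < lam^2 := by positivity
  have ht : (0:ℝ) < t := lt_of_lt_of_le (by positivity) h1
  have hlrw : (lam^2) ^ s = lam ^ (2*s) := by
    rw [← Real.rpow_natCast lam 2, ← Real.rpow_mul hl0.le]
    norm_num
  rcases le_or_gt 0 s with hs | hs
  · have e1 : t ^ s ≤ (17*lam^2) ^ s := Real.rpow_le_rpow ht.le h2 hs
    have e2 : (17*lam^2) ^ s = 17 ^ s * (lam^2) ^ s := Real.mul_rpow (by norm_num) hl2.le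
    have e3 : (17:ℝ) ^ s ≤ 68 ^ s := Real.rpow_le_rpow (by norm_num) (by norm_num) hs
    calc t ^ s ≤ 17 ^ s * (lam^2)^s := by rw [← e2]; exact e1
    _ ≤ 68 ^ s * (lam^2)^s := by
        apply mul_le_mul_of_nonneg_right e3 (Real.rpow_nonneg hl2.le s)
    _ = 68 ^ |s| * lam ^ (2*s) := by rw [_root_.abs_of_nonneg hs, hlrw]
  · have e1 : t ^ s ≤ (lam^2/4) ^ s :=
      Real.rpow_le_rpow_of_nonpos (by positivity) h1 hs.le
    have e2 : (lam^2/4) ^ s = (lam^2)^s / 4 ^ s := Real.div_rpow hl2.le (by norm_num : (0:ℝ) ≤ 4) s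
    have e3 : (4:ℝ) ^ s = ((4:ℝ) ^ (-s))⁻¹ := by
      rw [Real.rpow_neg (by norm_num)]; simp
    have e4 : ((4:ℝ)) ^ (-s) ≤ 68 ^ (-s) :=
      Real.rpow_le_rpow (by norm_num) (by norm_num) (by linarith)
    calc t ^ s ≤ (lam^2)^s / 4 ^ s := by rw [← e2]; exact e1
    _ = (lam^2)^s * 4 ^ (-s) := by rw [e3]; field_simp
    _ ≤ (lam^2)^s * 68 ^ (-s) := by
        apply mul_le_mul_of_nonneg_left e4 (Real.rpow_nonneg hl2.le s)
    _ = 68 ^ |s| * lam ^ (2*s) := by rw [_root_.abs_of_neg hs, hlrw]; ring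

lemma rpow_lower {t lam : ℝ} (s : ℝ) (hlam : 1 ≤ lam) (h1 : lam^2/4 ≤ t) (h2 : t ≤ 17*lam^2) :
    (68 ^ |s|)⁻¹ * lam ^ (2*s) ≤ t ^ s := by
  have hl0 : (0:ℝ) < lam := lt_of_lt_of_le one_pos hlam
  have hl2 : (0:ℝ) < lam^2 := by positivity
  have ht : (0:ℝ) < t := lt_of_lt_of_le (by positivity) h1
  have hlrw : (lam^2) ^ s = lam ^ (2*s) := by
    rw [← Real.rpow_natCast lam 2, ← Real.rpow_mul hl0.le]
    norm_num
  rcases le_or_gt 0 s with hs | hs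
  · have e1 : (lam^2/4) ^ s ≤ t ^ s := Real.rpow_le_rpow (by positivity) h1 hs
    have e2 : (lam^2/4) ^ s = (lam^2)^s / 4 ^ s := Real.div_rpow hl2.le (by norm_num : (0:ℝ) ≤ 4) s
    have e4 : ((4:ℝ)) ^ s ≤ 68 ^ s := Real.rpow_le_rpow (by norm_num) (by norm_num) hs
    have h68 : (0:ℝ) < 68 ^ s := Real.rpow_pos_of_pos (by norm_num) s
    have h4 : (0:ℝ) < 4 ^ s := Real.rpow_pos_of_pos (by norm_num) s
    calc (68 ^ |s|)⁻¹ * lam ^ (2*s) = (lam^2)^s / 68 ^ s := by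
          rw [_root_.abs_of_nonneg hs, hlrw]; ring
    _ ≤ (lam^2)^s / 4 ^ s := by
          apply div_le_div_of_nonneg_left (Real.rpow_nonneg hl2.le s) h4 e4
    _ = (lam^2/4) ^ s := e2.symm
    _ ≤ t ^ s := e1
  · have e1 : (17*lam^2) ^ s ≤ t ^ s :=
      Real.rpow_le_rpow_of_nonpos ht h2 hs.le
    have e2 : (17*lam^2) ^ s = 17 ^ s * (lam^2) ^ s := Real.mul_rpow (by norm_num) hl2.le
    have e3 : (17:ℝ) ^ s = ((17:ℝ) ^ (-s))⁻¹ := by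
      rw [Real.rpow_neg (by norm_num)]; simp
    have e4 : ((17:ℝ)) ^ (-s) ≤ 68 ^ (-s) :=
      Real.rpow_le_rpow (by norm_num) (by norm_num) (by linarith)
    have h68 : (0:ℝ) < (68:ℝ) ^ (-s) := Real.rpow_pos_of_pos (by norm_num) _
    have h17 : (0:ℝ) < (17:ℝ) ^ (-s) := Real.rpow_pos_of_pos (by norm_num) _
    calc (68 ^ |s|)⁻¹ * lam ^ (2*s) = ((68:ℝ) ^ (-s))⁻¹ * (lam^2)^s := by
          rw [_root_.abs_of_neg hs, hlrw]
    _ ≤ ((17:ℝ) ^ (-s))⁻¹ * (lam^2)^s := by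
          apply mul_le_mul_of_nonneg_right _ (Real.rpow_nonneg hl2.le s)
          exact inv_anti₀ h17 e4
    _ = (17*lam^2) ^ s := by rw [e2, ← e3]
    _ ≤ t ^ s := e1

/-- Region estimates: both weight factors lie in `[lam²/4, 17 lam²]`. -/
lemma waveWeight_bounds {lam : ℝ} (s b : ℝ) (hlam : 1 ≤ lam)
    {X : EuclideanSpace ℝ (Fin (n+1))}
    (h0 : |X 0| ≤ lam/2) (h1 : lam ≤ spatialNorm X) (h2 : spatialNorm X ≤ 4*lam)
    (h3 : lam/2 ≤ spatialNorm X - |X 0|) :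
    waveWeight s b X ≤ (68 ^ |s| * 68 ^ |b|) * (lam ^ (2*s) * lam ^ (2*b)) ∧
    (68 ^ |s| * 68 ^ |b|)⁻¹ * (lam ^ (2*s) * lam ^ (2*b)) ≤ waveWeight s b X := by
  have hlam0 : (0:ℝ) < lam := lt_of_lt_of_le one_pos hlam
  have hA1 : lam^2/4 ≤ 1 + spatialNorm X ^ 2 := by nlinarith
  have hA2 : 1 + spatialNorm X ^ 2 ≤ 17*lam^2 := by nlinarith
  have hzsq : (|X 0| - spatialNorm X)^2 = (spatialNorm X - |X 0|)^2 := by ring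
  have hB1 : lam^2/4 ≤ 1 + (|X 0| - spatialNorm X) ^ 2 := by
    rw [hzsq]; nlinarith
  have hB2 : 1 + (|X 0| - spatialNorm X) ^ 2 ≤ 17*lam^2 := by
    rw [hzsq]
    have habs : 0 ≤ |X 0| := abs_nonneg _
    nlinarith
  constructor
  · unfold waveWeight
    have u1 := rpow_upper s hlam hA1 hA2
    have u2 := rpow_upper b hlam hB1 hB2
    calc (1 + spatialNorm X ^ 2) ^ s * (1 + (|X 0| - spatialNorm X) ^ 2) ^ b
        ≤ (68 ^ |s| * lam ^ (2*s)) * (68 ^ |b| * lam ^ (2*b)) := by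
          apply mul_le_mul u1 u2 (Real.rpow_nonneg (by positivity) b) (by positivity)
      _ = (68 ^ |s| * 68 ^ |b|) * (lam ^ (2*s) * lam ^ (2*b)) := by ring
  · unfold waveWeight
    have u1 := rpow_lower s hlam hA1 hA2
    have u2 := rpow_lower b hlam hB1 hB2
    have p2 : (0:ℝ) ≤ (68 ^ |b|)⁻¹ * lam ^ (2*b) := by positivity
    calc (68 ^ |s| * 68 ^ |b|)⁻¹ * (lam ^ (2*s) * lam ^ (2*b))
        = ((68 ^ |s|)⁻¹ * lam ^ (2*s)) * ((68 ^ |b|)⁻¹ * lam ^ (2*b)) := by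
          rw [mul_inv]; ring
      _ ≤ (1 + spatialNorm X ^ 2) ^ s * (1 + (|X 0| - spatialNorm X) ^ 2) ^ b := by
          apply mul_le_mul u1 u2 p2 (Real.rpow_nonneg (by positivity) s)

lemma waveWeight_nonneg (s b : ℝ) (X : EuclideanSpace ℝ (Fin (n+1))) :
    0 ≤ waveWeight s b X := by
  unfold waveWeight
  positivity

lemma continuous_spatialNorm : Continuous (spatialNorm (n := n)) := by
  apply Real.continuous_sqrt.comp
  apply continuous_finset_sum
  intro i _
  exact ((EuclideanSpace.proj (i.succ : Fin (n+1))).continuous).pow 2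

lemma continuous_waveWeight (s b : ℝ) : Continuous (waveWeight (n := n) s b) := by
  unfold waveWeight
  apply Continuous.mul
  · apply Continuous.rpow_const
    · exact (continuous_const.add (continuous_spatialNorm.pow 2))
    · intro x
      left
      have := spatialNorm_nonneg (n := n) x
      positivity
  · apply Continuous.rpow_const
    · apply Continuous.add continuous_const
      apply Continuous.pow
      exact Continuous.sub ((EuclideanSpace.proj (0 : Fin (n+1))).continuous.abs)
        continuous_spatialNorm
    · intro x
      left
      positivity

noncomputable def toSchwartz (f : EuclideanSpace ℝ (Fin (n+1)) → ℂ)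
    (h1 : ContDiff ℝ ((⊤ : ℕ∞) : WithTop ℕ∞) f) (h2 : HasCompactSupport f) :
    SchwartzMap (EuclideanSpace ℝ (Fin (n+1))) ℂ where
  toFun := f
  smooth' := h1
  decay' := by
    intro k m
    have hcs : HasCompactSupport (fun x => ‖x‖^k * ‖iteratedFDeriv ℝ m f x‖) := by
      have h3 : HasCompactSupport (iteratedFDeriv ℝ m f) := h2.iteratedFDeriv m
      apply HasCompactSupport.intro (K := tsupport (iteratedFDeriv ℝ m f)) h3.isCompact
      intro x hx
      have : iteratedFDeriv ℝ m f x = 0 := image_eq_zero_of_notMem_tsupport hx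
      simp [this]
    have hco : Continuous (fun x => ‖x‖^k * ‖iteratedFDeriv ℝ m f x‖) :=
      ((continuous_norm).pow k).mul
        (h1.continuous_iteratedFDeriv (by exact_mod_cast le_top)).norm
    obtain ⟨C, hC⟩ := hcs.exists_bound_of_continuous hco
    refine ⟨C, fun x => ?_⟩
    have := hC x
    rwa [Real.norm_eq_abs, _root_.abs_of_nonneg (by positivity)] at this

@[simp] lemma toSchwartz_apply (f : EuclideanSpace ℝ (Fin (n+1)) → ℂ)
    (h1 : ContDiff ℝ ((⊤ : ℕ∞) : WithTop ℕ∞) f) (h2 : HasCompactSupport f) (x) :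
    toSchwartz f h1 h2 x = f x := rfl

lemma fourier_symm_eq (f : SchwartzMap (EuclideanSpace ℝ (Fin (n+1))) ℂ) :
    𝓕 ⇑((fourierTransformCLE ℝ (SchwartzMap (EuclideanSpace ℝ (Fin (n+1))) ℂ)).symm f) = ⇑f := by
  have h2 : ⇑((fourierTransformCLE ℝ (SchwartzMap (EuclideanSpace ℝ (Fin (n+1))) ℂ)) ((fourierTransformCLE ℝ (SchwartzMap (EuclideanSpace ℝ (Fin (n+1))) ℂ)).symm f))
      = 𝓕 ⇑((fourierTransformCLE ℝ (SchwartzMap (EuclideanSpace ℝ (Fin (n+1))) ℂ)).symm f) :=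
    rfl
  rw [ContinuousLinearEquiv.apply_symm_apply] at h2
  exact h2.symm

/-- Fourier transform of a product of two inverse Fourier transforms of Schwartz
functions is the convolution. -/
lemma fourier_mul_eq_conv (f g : SchwartzMap (EuclideanSpace ℝ (Fin (n+1))) ℂ)
    (Ξ : EuclideanSpace ℝ (Fin (n+1))) :
    𝓕 (fun X => ((fourierTransformCLE ℝ (SchwartzMap (EuclideanSpace ℝ (Fin (n+1))) ℂ)).symm f) X * ((fourierTransformCLE ℝ (SchwartzMap (EuclideanSpace ℝ (Fin (n+1))) ℂ)).symm g) X) Ξ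
      = ∫ η, f η * g (Ξ - η) := by
  set u := (fourierTransformCLE ℝ (SchwartzMap (EuclideanSpace ℝ (Fin (n+1))) ℂ)).symm f with hu
  set v := (fourierTransformCLE ℝ (SchwartzMap (EuclideanSpace ℝ (Fin (n+1))) ℂ)).symm g with hv
  have huf : ∀ X : EuclideanSpace ℝ (Fin (n+1)),
      u X = ∫ η : EuclideanSpace ℝ (Fin (n+1)),
        Complex.exp ((2 * Real.pi * ⟪η, X⟫ : ℝ) * Complex.I) * f η := by
    intro X
    have h1 : ⇑u = 𝓕⁻ ⇑f := by rw [hu]; exact fourierInv_coe f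
    rw [h1, Real.fourierInv_eq']
    simp [smul_eq_mul]
  have hvF : 𝓕 ⇑v = ⇑g := fourier_symm_eq g
  have key : ∀ X : EuclideanSpace ℝ (Fin (n+1)),
      Complex.exp ((-2 * Real.pi * ⟪X, Ξ⟫ : ℝ) * Complex.I) * (u X * v X)
      = ∫ η : EuclideanSpace ℝ (Fin (n+1)),
          Complex.exp ((-2 * Real.pi * ⟪X, Ξ⟫ : ℝ) * Complex.I)
          * Complex.exp ((2 * Real.pi * ⟪η, X⟫ : ℝ) * Complex.I) * (f η * v X) := by
    intro X
    rw [huf X]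
    rw [← MeasureTheory.integral_mul_const, ← MeasureTheory.integral_const_mul]
    congr 1
    funext η
    ring
  rw [Real.fourier_eq']
  simp only [smul_eq_mul]
  have keyfun : (fun X : EuclideanSpace ℝ (Fin (n+1)) =>
      Complex.exp (↑(-2 * Real.pi * ⟪X, Ξ⟫) * Complex.I) * (u X * v X))
      = fun X : EuclideanSpace ℝ (Fin (n+1)) => ∫ η : EuclideanSpace ℝ (Fin (n+1)),
          Complex.exp ((-2 * Real.pi * ⟪X, Ξ⟫ : ℝ) * Complex.I)
          * Complex.exp ((2 * Real.pi * ⟪η, X⟫ : ℝ) * Complex.I) * (f η * v X) := by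
    funext X; exact key X
  rw [keyfun]
  have hint : Integrable (Function.uncurry fun (X η : EuclideanSpace ℝ (Fin (n+1))) =>
      Complex.exp ((-2 * Real.pi * ⟪X, Ξ⟫ : ℝ) * Complex.I)
        * Complex.exp ((2 * Real.pi * ⟪η, X⟫ : ℝ) * Complex.I) * (f η * v X))
      (volume.prod volume) := by
    have hbase : Integrable
        (fun p : EuclideanSpace ℝ (Fin (n+1)) × EuclideanSpace ℝ (Fin (n+1)) =>
          v p.1 * f p.2) (volume.prod volume) :=
      (v.integrable (μ := volume)).mul_prod (f.integrable (μ := volume))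
    have heq : (Function.uncurry fun (X η : EuclideanSpace ℝ (Fin (n+1))) =>
        Complex.exp ((-2 * Real.pi * ⟪X, Ξ⟫ : ℝ) * Complex.I)
          * Complex.exp ((2 * Real.pi * ⟪η, X⟫ : ℝ) * Complex.I) * (f η * v X))
        = fun p : EuclideanSpace ℝ (Fin (n+1)) × EuclideanSpace ℝ (Fin (n+1)) =>
          (Complex.exp ((-2 * Real.pi * ⟪p.1, Ξ⟫ : ℝ) * Complex.I)
          * Complex.exp ((2 * Real.pi * ⟪p.2, p.1⟫ : ℝ) * Complex.I)) * (v p.1 * f p.2) := by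
      funext p
      simp only [Function.uncurry]
      ring
    rw [heq]
    apply hbase.bdd_mul (c := 1)
    · apply Continuous.aestronglyMeasurable
      apply Continuous.mul
      · apply Complex.continuous_exp.comp
        apply Continuous.mul _ continuous_const
        exact Complex.continuous_ofReal.comp
          (continuous_const.mul ((continuous_fst.inner continuous_const)))
      · apply Complex.continuous_exp.comp
        apply Continuous.mul _ continuous_const
        exact Complex.continuous_ofReal.comp
          (continuous_const.mul ((continuous_snd.inner continuous_fst)))
    · refine Filter.Eventually.of_forall (fun p => ?_)
      rw [norm_mul]
      rw [Complex.norm_exp_ofReal_mul_I,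
        Complex.norm_exp_ofReal_mul_I]
      norm_num
  rw [MeasureTheory.integral_integral_swap hint]
  congr 1
  funext η
  have hptw : ∀ X : EuclideanSpace ℝ (Fin (n+1)),
      Complex.exp ((-2 * Real.pi * ⟪X, Ξ⟫ : ℝ) * Complex.I)
        * Complex.exp ((2 * Real.pi * ⟪η, X⟫ : ℝ) * Complex.I) * (f η * v X)
      = f η * (Complex.exp ((-2 * Real.pi * ⟪X, Ξ - η⟫ : ℝ) * Complex.I) * v X) := by
    intro X
    rw [← Complex.exp_add]
    have harg : ((-2 * Real.pi * ⟪X, Ξ⟫ : ℝ) * Complex.I)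
        + ((2 * Real.pi * ⟪η, X⟫ : ℝ) * Complex.I)
        = ((-2 * Real.pi * ⟪X, Ξ - η⟫ : ℝ) * Complex.I) := by
      rw [← add_mul]
      congr 1
      rw [← Complex.ofReal_add]
      congr 1
      rw [inner_sub_right]
      rw [real_inner_comm η X]
      ring
    rw [harg]
    ring
  simp only [hptw]
  rw [MeasureTheory.integral_const_mul]
  congr 1
  rw [← hvF, Real.fourier_eq']
  simp [smul_eq_mul]

end WaveAux

set_option maxHeartbeats 2000000 in
/-- necessity of a condition for the product estimate
`‖uv‖_{H^{−s₀,−b₀}} ≤ C ‖u‖_{H^{s₁,b₁}} ‖v‖_{H^{s₂,b₂}}` on `ℝ^{1+n}`. -/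
theorem product_necessary_full_scaling (n : ℕ) (hn : 1 ≤ n) (s₀ s₁ s₂ b₀ b₁ b₂ : ℝ)
    (h : ∃ C : ℝ, ∀ u v : SchwartzMap (EuclideanSpace ℝ (Fin (n + 1))) ℂ,
      waveSobolevNorm n (-s₀) (-b₀) (fun X => u X * v X) ≤
        C * waveSobolevNorm n s₁ b₁ u * waveSobolevNorm n s₂ b₂ v) :
    s₀ + s₁ + s₂ + b₀ + b₁ + b₂ ≥ ((n : ℝ) + 1) / 2 := by
  classical
  obtain ⟨C, hC⟩ := h
  have hd1 : (1:ℕ) < n+1 := by omega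
  set j : Fin (n+1) := ⟨1, hd1⟩ with hjdef
  have hj0 : j ≠ 0 := by simp [hjdef, Fin.ext_iff]
  set B : ℝ := (volume (Metric.ball (0 : EuclideanSpace ℝ (Fin (n+1))) 1)).toReal with hBdef
  have hBpos : 0 < B := by
    rw [hBdef]
    exact ENNReal.toReal_pos (measure_ball_pos volume _ one_pos).ne' measure_ball_lt_top.ne
  set K₀ : ℝ := 68 ^ |(-s₀)| * 68 ^ |(-b₀)| with hK0
  set K₁ : ℝ := 68 ^ |s₁| * 68 ^ |b₁| with hK1
  set K₂ : ℝ := 68 ^ |s₂| * 68 ^ |b₂| with hK2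
  have hK0pos : 0 < K₀ := by rw [hK0]; positivity
  have hK1pos : 0 < K₁ := by rw [hK1]; positivity
  have hK2pos : 0 < K₂ := by rw [hK2]; positivity
  -- The key scaling inequality, obtained by testing the product estimate on
  -- Schwartz functions whose Fourier transform is a bump at frequency scale `lam`.
  have key : ∀ lam : ℝ, 1 ≤ lam →
      K₀⁻¹ * (lam ^ (2*(-s₀)) * lam ^ (2*(-b₀))) * ((lam/8)^(n+1) * B)^3 ≤
      C^2 * (K₁ * (lam ^ (2*s₁) * lam ^ (2*b₁)) * (lam^(n+1) * B))
          * (K₂ * (lam ^ (2*s₂) * lam ^ (2*b₂)) * (lam^(n+1) * B)) := by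
    intro lam hlam
    have hlam0 : (0:ℝ) < lam := lt_of_lt_of_le one_pos hlam
    set P : EuclideanSpace ℝ (Fin (n+1)) := EuclideanSpace.single j (3/2*lam) with hP
    set Q : EuclideanSpace ℝ (Fin (n+1)) := EuclideanSpace.single j (3*lam) with hQ
    have hQP : Q = P + P := by
      rw [hP, hQ]
      ext i
      simp only [PiLp.add_apply, EuclideanSpace.single_apply]
      split <;> ring
    have hP0 : P 0 = 0 := WaveAux.single_zero_coord j hj0 _
    have hQ0 : Q 0 = 0 := WaveAux.single_zero_coord j hj0 _
    have hsP : spatialNorm P = 3/2*lam := by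
      rw [hP, WaveAux.spat_single j hj0, _root_.abs_of_nonneg (by positivity)]
    have hsQ : spatialNorm Q = 3*lam := by
      rw [hQ, WaveAux.spat_single j hj0, _root_.abs_of_nonneg (by positivity)]
    set φ : ContDiffBump P := ⟨lam/4, lam/2, by positivity, by linarith⟩ with hφ
    have hrIn : φ.rIn = lam/4 := rfl
    have hrOut : φ.rOut = lam/2 := rfl
    set fA : SchwartzMap (EuclideanSpace ℝ (Fin (n+1))) ℂ :=
      WaveAux.toSchwartz (fun x => ((φ x : ℝ) : ℂ))
        (Complex.ofRealCLM.contDiff.comp φ.contDiff)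
        (φ.hasCompactSupport.comp_left (g := fun r : ℝ => (r:ℂ)) Complex.ofReal_zero) with hfA
    set u := (fourierTransformCLE ℝ (SchwartzMap (EuclideanSpace ℝ (Fin (n+1))) ℂ)).symm fA with hu
    have hufA : 𝓕 ⇑u = ⇑fA := by rw [hu]; exact WaveAux.fourier_symm_eq fA
    -- upper bound for the norms of u
    have upper : ∀ s b : ℝ, (∫ X, waveWeight s b X * ‖𝓕 (⇑u) X‖^2)
        ≤ (68 ^ |s| * 68 ^ |b|) * (lam ^ (2*s) * lam ^ (2*b)) * (lam^(n+1) * B) := by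
      intro s b
      have hfn : (fun X => waveWeight s b X * ‖𝓕 (⇑u) X‖^2)
          = fun X => waveWeight s b X * (φ X)^2 := by
        funext X
        rw [hufA]
        have hnrm : ‖fA X‖^2 = (φ X)^2 := by
          show ‖((φ X : ℝ) : ℂ)‖^2 = (φ X)^2; rw [Complex.norm_real, Real.norm_eq_abs, sq_abs]
        rw [hnrm]
      rw [hfn]
      have hzero : ∀ X, X ∉ Metric.closedBall P (lam/2) → waveWeight s b X * (φ X)^2 = 0 := by
        intro X hX
        have hns : X ∉ Function.support ⇑φ := by
          rw [φ.support_eq]; exact fun hx => hX (Metric.ball_subset_closedBall hx)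
        rw [Function.notMem_support.mp hns]; ring
      have hcont : Continuous (fun X => waveWeight s b X * (φ X)^2) :=
        (WaveAux.continuous_waveWeight s b).mul (φ.continuous.pow 2)
      have hcs : HasCompactSupport (fun X => waveWeight s b X * (φ X)^2) :=
        HasCompactSupport.intro (isCompact_closedBall P (lam/2)) hzero
      have hint : Integrable (fun X => waveWeight s b X * (φ X)^2) volume :=
        hcont.integrable_of_hasCompactSupport hcs
      have hvol : (volume (Metric.closedBall P (lam/2))).toReal ≤ lam^(n+1) * B := by
        have hsub : Metric.closedBall P (lam/2) ⊆ Metric.ball P lam :=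
          Metric.closedBall_subset_ball (by linarith)
        have hmono := measure_mono (μ := volume) hsub
        have hballvol : volume (Metric.ball P lam)
            = ENNReal.ofReal (lam ^ (n+1))
              * volume (Metric.ball (0:EuclideanSpace ℝ (Fin (n+1))) 1) := by
          rw [Measure.addHaar_ball volume P hlam0.le, finrank_euclideanSpace_fin]
        calc (volume (Metric.closedBall P (lam/2))).toReal
            ≤ (volume (Metric.ball P lam)).toReal := by
              apply ENNReal.toReal_mono _ hmono
              rw [hballvol]
              exact ENNReal.mul_ne_top ENNReal.ofReal_ne_top measure_ball_lt_top.ne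
          _ = lam^(n+1) * B := by
              rw [hballvol, ENNReal.toReal_mul, ENNReal.toReal_ofReal (by positivity), hBdef]
      calc ∫ X, waveWeight s b X * (φ X)^2
          = ∫ X in Metric.closedBall P (lam/2), waveWeight s b X * (φ X)^2 :=
            (setIntegral_eq_integral_of_forall_compl_eq_zero hzero).symm
        _ ≤ ∫ _X in Metric.closedBall P (lam/2),
              ((68 ^ |s| * 68 ^ |b|) * (lam ^ (2*s) * lam ^ (2*b))) := by
            apply setIntegral_mono_on hint.integrableOn
              (integrableOn_const measure_closedBall_lt_top.ne)
              measurableSet_closedBall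
            intro X hX
            have hXP : ‖X - P‖ ≤ lam/2 := by
              rw [Metric.mem_closedBall, dist_eq_norm] at hX; exact hX
            have h0' : |X 0| ≤ lam/2 := by
              have habs := WaveAux.abs_coord_le_norm (X - P) 0
              simp only [PiLp.sub_apply, hP0, sub_zero] at habs
              linarith
            have hs1 : lam ≤ spatialNorm X := by
              have htr := WaveAux.spat_triangle P X
              rw [hsP, norm_sub_rev P X] at htr
              linarith
            have hs2 : spatialNorm X ≤ 4*lam := by
              have htr := WaveAux.spat_triangle X P
              rw [hsP] at htr
              linarith
            have hs3 : lam/2 ≤ spatialNorm X - |X 0| := by linarith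
            have hw := (WaveAux.waveWeight_bounds s b hlam h0' hs1 hs2 hs3).1
            have hφ1 : φ X ≤ 1 := φ.le_one
            have hφ0 : 0 ≤ φ X := φ.nonneg
            have hwn := WaveAux.waveWeight_nonneg s b X
            have hφ2 : (φ X : ℝ)^2 ≤ 1 := by nlinarith
            calc waveWeight s b X * (φ X)^2 ≤ waveWeight s b X * 1 :=
                mul_le_mul_of_nonneg_left hφ2 hwn
            _ = waveWeight s b X := mul_one _
            _ ≤ 68 ^ |s| * 68 ^ |b| * (lam ^ (2*s) * lam ^ (2*b)) := hw
        _ = (volume (Metric.closedBall P (lam/2))).toReal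
              * ((68 ^ |s| * 68 ^ |b|) * (lam ^ (2*s) * lam ^ (2*b))) := by
            rw [setIntegral_const, smul_eq_mul, measureReal_def]
        _ ≤ (68 ^ |s| * 68 ^ |b|) * (lam ^ (2*s) * lam ^ (2*b)) * (lam^(n+1) * B) := by
            rw [mul_comm]
            exact mul_le_mul_of_nonneg_left hvol (by positivity)
    -- the convolution representation of 𝓕(u·u)
    set ψ : EuclideanSpace ℝ (Fin (n+1)) → ℝ := fun Ξ => ∫ η, φ η * φ (Ξ - η) with hψdef
    have hconv : ∀ Ξ, 𝓕 (fun X => u X * u X) Ξ = ((ψ Ξ : ℝ) : ℂ) := by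
      intro Ξ
      have hcv := WaveAux.fourier_mul_eq_conv fA fA Ξ
      rw [← hu] at hcv
      rw [hcv]
      have hre : ∀ η, (fA η * fA (Ξ - η) : ℂ) = ((φ η * φ (Ξ - η) : ℝ) : ℂ) := by
        intro η
        show ((φ η : ℝ) : ℂ) * ((φ (Ξ - η) : ℝ) : ℂ) = _; rw [Complex.ofReal_mul]
      simp only [hre]
      rw [hψdef]
      exact integral_ofReal
    have hφc2 : ∀ Ξ : EuclideanSpace ℝ (Fin (n+1)),
        Continuous (fun η => φ η * φ (Ξ - η)) := fun Ξ =>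
      φ.continuous.mul (φ.continuous.comp (continuous_const.sub continuous_id))
    have hφcs2 : ∀ Ξ : EuclideanSpace ℝ (Fin (n+1)),
        HasCompactSupport (fun η => φ η * φ (Ξ - η)) := by
      intro Ξ
      apply HasCompactSupport.intro (isCompact_closedBall P (lam/2))
      intro η hη
      have hns : η ∉ Function.support ⇑φ := by
        rw [φ.support_eq]; exact fun hx => hη (Metric.ball_subset_closedBall hx)
      rw [Function.notMem_support.mp hns, zero_mul]
    have hφint2 : ∀ Ξ : EuclideanSpace ℝ (Fin (n+1)),
        Integrable (fun η => φ η * φ (Ξ - η)) volume := fun Ξ =>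
      (hφc2 Ξ).integrable_of_hasCompactSupport (hφcs2 Ξ)
    have hψzero : ∀ Ξ, Ξ ∉ Metric.closedBall Q lam → ψ Ξ = 0 := by
      intro Ξ hΞ
      rw [hψdef]
      have hz : ∀ η, φ η * φ (Ξ - η) = 0 := by
        intro η
        by_contra hne
        have h1 : φ η ≠ 0 := fun hq => hne (by rw [hq, zero_mul])
        have h2 : φ (Ξ - η) ≠ 0 := fun hq => hne (by rw [hq, mul_zero])
        have m1 : η ∈ Metric.ball P (lam/2) := by rw [← φ.support_eq]; exact h1
        have m2 : Ξ - η ∈ Metric.ball P (lam/2) := by rw [← φ.support_eq]; exact h2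
        rw [Metric.mem_ball, dist_eq_norm] at m1 m2
        apply hΞ
        rw [Metric.mem_closedBall, dist_eq_norm, hQP]
        have hsplit : Ξ - (P + P) = (η - P) + (Ξ - η - P) := by abel
        calc ‖Ξ - (P+P)‖ = ‖(η - P) + (Ξ - η - P)‖ := by rw [hsplit]
        _ ≤ ‖η - P‖ + ‖Ξ - η - P‖ := norm_add_le _ _
        _ ≤ lam := by linarith
      simp only [hz, integral_zero]
    have hψlb : ∀ Ξ ∈ Metric.closedBall Q (lam/8), (lam/8)^(n+1) * B ≤ ψ Ξ := by
      intro Ξ hΞ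
      rw [Metric.mem_closedBall, dist_eq_norm] at hΞ
      have hone : ∀ η ∈ Metric.ball P (lam/8), (1:ℝ) ≤ φ η * φ (Ξ - η) := by
        intro η hη
        rw [Metric.mem_ball, dist_eq_norm] at hη
        have e1 : φ η = 1 := φ.one_of_mem_closedBall (by
          rw [Metric.mem_closedBall, dist_eq_norm, hrIn]
          linarith)
        have e2 : φ (Ξ - η) = 1 := by
          apply φ.one_of_mem_closedBall
          rw [Metric.mem_closedBall, dist_eq_norm, hrIn]
          have hsplit : Ξ - η - P = (Ξ - Q) - (η - P) := by rw [hQP]; abel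
          calc ‖Ξ - η - P‖ = ‖(Ξ - Q) - (η - P)‖ := by rw [hsplit]
          _ ≤ ‖Ξ - Q‖ + ‖η - P‖ := norm_sub_le _ _
          _ ≤ lam/4 := by linarith
        rw [e1, e2]; norm_num
      have hvol8 : (volume (Metric.ball P (lam/8))).toReal = (lam/8)^(n+1) * B := by
        rw [Measure.addHaar_ball volume P (by positivity : (0:ℝ) ≤ lam/8),
          finrank_euclideanSpace_fin, ENNReal.toReal_mul,
          ENNReal.toReal_ofReal (by positivity), hBdef]
      calc (lam/8)^(n+1) * B = ∫ _η in Metric.ball P (lam/8), (1:ℝ) := by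
            rw [setIntegral_const, smul_eq_mul, measureReal_def, mul_one, hvol8]
      _ ≤ ∫ η in Metric.ball P (lam/8), φ η * φ (Ξ - η) :=
          setIntegral_mono_on (integrableOn_const measure_ball_lt_top.ne)
            ((hφint2 Ξ).integrableOn) measurableSet_ball hone
      _ ≤ ψ Ξ := by
          rw [hψdef]
          exact setIntegral_le_integral (hφint2 Ξ)
            (Filter.Eventually.of_forall (fun η => mul_nonneg φ.nonneg φ.nonneg))
    -- continuity of ψ via continuity of the Fourier transform
    have huuint : Integrable (fun X => u X * u X) volume := by
      apply (u.integrable (μ := volume)).bdd_mul (c := SchwartzMap.seminorm ℝ 0 0 u) u.continuous.aestronglyMeasurable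
      refine Filter.Eventually.of_forall (fun x => ?_)
      simpa [norm_iteratedFDeriv_zero] using SchwartzMap.le_seminorm ℝ 0 0 u x
    have h𝓕cont : Continuous (𝓕 (fun X => u X * u X)) := by
      apply VectorFourier.fourierIntegral_continuous Real.continuous_fourierChar
        _ huuint
      have hci : Continuous fun p : (EuclideanSpace ℝ (Fin (n+1))) × (EuclideanSpace ℝ (Fin (n+1))) => (inner ℝ p.1 p.2 : ℝ) := continuous_inner
      simpa using hci
    have hψcont : Continuous ψ := by
      have hψeq : ψ = fun Ξ => (𝓕 (fun X => u X * u X) Ξ).re := by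
        funext Ξ
        rw [hconv Ξ, Complex.ofReal_re]
      rw [hψeq]
      exact Complex.continuous_re.comp h𝓕cont
    -- lower bound for the norm of u·u
    have lower : K₀⁻¹ * (lam ^ (2*(-s₀)) * lam ^ (2*(-b₀))) * ((lam/8)^(n+1) * B)^3
        ≤ ∫ X, waveWeight (-s₀) (-b₀) X * ‖𝓕 (fun X => u X * u X) X‖^2 := by
      have hfn0 : (fun X => waveWeight (-s₀) (-b₀) X * ‖𝓕 (fun X => u X * u X) X‖^2)
          = fun X => waveWeight (-s₀) (-b₀) X * (ψ X)^2 := by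
        funext X
        rw [hconv X, Complex.norm_real, Real.norm_eq_abs, sq_abs]
      rw [hfn0]
      have hzero0 : ∀ X, X ∉ Metric.closedBall Q lam
          → waveWeight (-s₀) (-b₀) X * (ψ X)^2 = 0 := by
        intro X hX; rw [hψzero X hX]; ring
      have hint0 : Integrable (fun X => waveWeight (-s₀) (-b₀) X * (ψ X)^2) volume :=
        ((WaveAux.continuous_waveWeight _ _).mul (hψcont.pow 2)).integrable_of_hasCompactSupport
          (HasCompactSupport.intro (isCompact_closedBall Q lam) hzero0)
      have step1 : ∫ X in Metric.closedBall Q (lam/8), waveWeight (-s₀) (-b₀) X * (ψ X)^2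
          ≤ ∫ X, waveWeight (-s₀) (-b₀) X * (ψ X)^2 :=
        setIntegral_le_integral hint0 (Filter.Eventually.of_forall
          (fun X => mul_nonneg (WaveAux.waveWeight_nonneg _ _ X) (sq_nonneg _)))
      have hm₀ : ∀ X ∈ Metric.closedBall Q (lam/8),
          K₀⁻¹ * (lam ^ (2*(-s₀)) * lam ^ (2*(-b₀))) * ((lam/8)^(n+1) * B)^2
            ≤ waveWeight (-s₀) (-b₀) X * (ψ X)^2 := by
        intro X hXmem
        have hX := hXmem
        rw [Metric.mem_closedBall, dist_eq_norm] at hX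
        have h0'' : |X 0| ≤ lam/8 := by
          have habs := WaveAux.abs_coord_le_norm (X - Q) 0
          simp only [PiLp.sub_apply, hQ0, sub_zero] at habs
          linarith
        have h0' : |X 0| ≤ lam/2 := by linarith
        have hs1 : lam ≤ spatialNorm X := by
          have htr := WaveAux.spat_triangle Q X
          rw [hsQ, norm_sub_rev Q X] at htr
          linarith
        have hs2 : spatialNorm X ≤ 4*lam := by
          have htr := WaveAux.spat_triangle X Q
          rw [hsQ] at htr
          linarith
        have hs3 : lam/2 ≤ spatialNorm X - |X 0| := by linarith
        have hw := (WaveAux.waveWeight_bounds (-s₀) (-b₀) hlam h0' hs1 hs2 hs3).2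
        have hψX := hψlb X hXmem
        have hψXnn : (0:ℝ) ≤ (lam/8)^(n+1) * B := by positivity
        have hsq2 : ((lam/8)^(n+1) * B)^2 ≤ (ψ X)^2 := by
          apply pow_le_pow_left₀ hψXnn hψX
        have hmm := mul_le_mul hw hsq2 (by positivity)
          (WaveAux.waveWeight_nonneg (-s₀) (-b₀) X)
        calc K₀⁻¹ * (lam ^ (2*(-s₀)) * lam ^ (2*(-b₀))) * ((lam/8)^(n+1) * B)^2
            = (68 ^ |(-s₀)| * 68 ^ |(-b₀)|)⁻¹ * (lam ^ (2*(-s₀)) * lam ^ (2*(-b₀)))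
              * ((lam/8)^(n+1) * B)^2 := by rw [hK0]
        _ ≤ waveWeight (-s₀) (-b₀) X * (ψ X)^2 := hmm
      have hvolQ : (lam/8)^(n+1) * B ≤ (volume (Metric.closedBall Q (lam/8))).toReal := by
        have hmono := measure_mono (μ := volume) (Metric.ball_subset_closedBall
          (x := Q) (ε := lam/8))
        have hvol8 : (volume (Metric.ball Q (lam/8))).toReal = (lam/8)^(n+1) * B := by
          rw [Measure.addHaar_ball volume Q (by positivity : (0:ℝ) ≤ lam/8),
            finrank_euclideanSpace_fin, ENNReal.toReal_mul,
            ENNReal.toReal_ofReal (by positivity), hBdef]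
        rw [← hvol8]
        exact ENNReal.toReal_mono measure_closedBall_lt_top.ne hmono
      have step2 : K₀⁻¹ * (lam ^ (2*(-s₀)) * lam ^ (2*(-b₀))) * ((lam/8)^(n+1) * B)^2
            * ((lam/8)^(n+1) * B)
          ≤ ∫ X in Metric.closedBall Q (lam/8), waveWeight (-s₀) (-b₀) X * (ψ X)^2 := by
        have hci := setIntegral_mono_on
          (integrableOn_const measure_closedBall_lt_top.ne)
          hint0.integrableOn measurableSet_closedBall hm₀
        rw [setIntegral_const, smul_eq_mul, measureReal_def] at hci
        have hm0nn : (0:ℝ) ≤ K₀⁻¹ * (lam ^ (2*(-s₀)) * lam ^ (2*(-b₀)))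
            * ((lam/8)^(n+1) * B)^2 := by positivity
        calc K₀⁻¹ * (lam ^ (2*(-s₀)) * lam ^ (2*(-b₀))) * ((lam/8)^(n+1) * B)^2
              * ((lam/8)^(n+1) * B)
            ≤ K₀⁻¹ * (lam ^ (2*(-s₀)) * lam ^ (2*(-b₀))) * ((lam/8)^(n+1) * B)^2
              * (volume (Metric.closedBall Q (lam/8))).toReal :=
              mul_le_mul_of_nonneg_left hvolQ hm0nn
        _ = (volume (Metric.closedBall Q (lam/8))).toReal
              * (K₀⁻¹ * (lam ^ (2*(-s₀)) * lam ^ (2*(-b₀))) * ((lam/8)^(n+1) * B)^2) := by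
            ring
        _ ≤ ∫ X in Metric.closedBall Q (lam/8), waveWeight (-s₀) (-b₀) X * (ψ X)^2 := hci
      calc K₀⁻¹ * (lam ^ (2*(-s₀)) * lam ^ (2*(-b₀))) * ((lam/8)^(n+1) * B)^3
          = K₀⁻¹ * (lam ^ (2*(-s₀)) * lam ^ (2*(-b₀))) * ((lam/8)^(n+1) * B)^2
            * ((lam/8)^(n+1) * B) := by ring
      _ ≤ ∫ X in Metric.closedBall Q (lam/8), waveWeight (-s₀) (-b₀) X * (ψ X)^2 := step2
      _ ≤ ∫ X, waveWeight (-s₀) (-b₀) X * (ψ X)^2 := step1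
    -- assemble via the hypothesis
    have hCu := hC u u
    have hIsnn : ∀ (s b : ℝ) (f : EuclideanSpace ℝ (Fin (n+1)) → ℂ),
        0 ≤ ∫ X, waveWeight s b X * ‖𝓕 f X‖^2 := fun s b f =>
      integral_nonneg fun X => mul_nonneg (WaveAux.waveWeight_nonneg s b X) (by positivity)
    have hN1 : waveSobolevNorm n s₁ b₁ ⇑u
        ≤ (K₁ * (lam ^ (2*s₁) * lam ^ (2*b₁)) * (lam^(n+1) * B)) ^ (1/2:ℝ) := by
      unfold waveSobolevNorm
      apply Real.rpow_le_rpow (hIsnn s₁ b₁ ⇑u) _ (by norm_num)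
      rw [hK1]
      exact upper s₁ b₁
    have hN2 : waveSobolevNorm n s₂ b₂ ⇑u
        ≤ (K₂ * (lam ^ (2*s₂) * lam ^ (2*b₂)) * (lam^(n+1) * B)) ^ (1/2:ℝ) := by
      unfold waveSobolevNorm
      apply Real.rpow_le_rpow (hIsnn s₂ b₂ ⇑u) _ (by norm_num)
      rw [hK2]
      exact upper s₂ b₂
    have hL12 : (K₀⁻¹ * (lam ^ (2*(-s₀)) * lam ^ (2*(-b₀))) * ((lam/8)^(n+1) * B)^3) ^ (1/2:ℝ)
        ≤ waveSobolevNorm n (-s₀) (-b₀) (fun X => u X * u X) := by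
      unfold waveSobolevNorm
      exact Real.rpow_le_rpow (by positivity) lower (by norm_num)
    set U₁ : ℝ := K₁ * (lam ^ (2*s₁) * lam ^ (2*b₁)) * (lam^(n+1) * B) with hU1
    set U₂ : ℝ := K₂ * (lam ^ (2*s₂) * lam ^ (2*b₂)) * (lam^(n+1) * B) with hU2
    set L₀ : ℝ := K₀⁻¹ * (lam ^ (2*(-s₀)) * lam ^ (2*(-b₀))) * ((lam/8)^(n+1) * B)^3 with hL0
    have hU1nn : (0:ℝ) ≤ U₁ := by rw [hU1]; positivity
    have hU2nn : (0:ℝ) ≤ U₂ := by rw [hU2]; positivity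
    have hL0nn : (0:ℝ) ≤ L₀ := by rw [hL0]; positivity
    have hn1 : 0 ≤ waveSobolevNorm n s₁ b₁ ⇑u :=
      Real.rpow_nonneg (hIsnn s₁ b₁ ⇑u) _
    have hn2 : 0 ≤ waveSobolevNorm n s₂ b₂ ⇑u :=
      Real.rpow_nonneg (hIsnn s₂ b₂ ⇑u) _
    have hfin : L₀ ^ (1/2:ℝ) ≤ |C| * (U₁ ^ (1/2:ℝ)) * (U₂ ^ (1/2:ℝ)) := by
      calc L₀ ^ (1/2:ℝ) ≤ waveSobolevNorm n (-s₀) (-b₀) (fun X => u X * u X) := hL12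
      _ ≤ C * waveSobolevNorm n s₁ b₁ ⇑u * waveSobolevNorm n s₂ b₂ ⇑u := hCu
      _ ≤ |C| * waveSobolevNorm n s₁ b₁ ⇑u * waveSobolevNorm n s₂ b₂ ⇑u := by
          apply mul_le_mul_of_nonneg_right _ hn2
          exact mul_le_mul_of_nonneg_right (le_abs_self C) hn1
      _ ≤ |C| * (U₁ ^ (1/2:ℝ)) * waveSobolevNorm n s₂ b₂ ⇑u := by
          apply mul_le_mul_of_nonneg_right _ hn2
          exact mul_le_mul_of_nonneg_left hN1 (abs_nonneg C)
      _ ≤ |C| * (U₁ ^ (1/2:ℝ)) * (U₂ ^ (1/2:ℝ)) := by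
          apply mul_le_mul_of_nonneg_left hN2
          positivity
    have hsqr : ∀ x : ℝ, 0 ≤ x → (x ^ (1/2:ℝ))^2 = x := by
      intro x hx
      rw [← Real.rpow_natCast (x ^ (1/2:ℝ)) 2, ← Real.rpow_mul hx]
      norm_num
    have hsq3 := pow_le_pow_left₀ (Real.rpow_nonneg hL0nn _) hfin 2
    rw [hsqr _ hL0nn] at hsq3
    have hrhs : (|C| * (U₁ ^ (1/2:ℝ)) * (U₂ ^ (1/2:ℝ)))^2 = C^2 * U₁ * U₂ := by
      rw [mul_pow, mul_pow, sq_abs, hsqr _ hU1nn, hsqr _ hU2nn]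
    rw [hrhs] at hsq3
    calc K₀⁻¹ * (lam ^ (2*(-s₀)) * lam ^ (2*(-b₀))) * ((lam/8)^(n+1) * B)^3 = L₀ := by
          rw [hL0]
    _ ≤ C^2 * U₁ * U₂ := hsq3
    _ = C^2 * (K₁ * (lam ^ (2*s₁) * lam ^ (2*b₁)) * (lam^(n+1) * B))
          * (K₂ * (lam ^ (2*s₂) * lam ^ (2*b₂)) * (lam^(n+1) * B)) := by
        rw [hU1, hU2]
  -- From the key inequality, extract the polynomial growth bound and conclude.
  set cL : ℝ := K₀⁻¹ * B^3 / ((8:ℝ)^(n+1))^3 with hcL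
  set cR : ℝ := C^2 * K₁ * K₂ * B^2 with hcR
  have hcLpos : 0 < cL := by rw [hcL]; positivity
  set M : ℝ := cR / cL with hM
  have bound : ∀ lam : ℝ, 1 ≤ lam →
      lam ^ (((n:ℝ)+1) - 2*(s₀ + s₁ + s₂ + b₀ + b₁ + b₂)) ≤ M := by
    intro lam hlam
    have hlam0 : (0:ℝ) < lam := lt_of_lt_of_le one_pos hlam
    have hkey := key lam hlam
    set pL : ℝ := ((n+1:ℕ)*3 : ℕ) + (2*(-s₀) + 2*(-b₀)) with hpL
    set pR : ℝ := ((n+1:ℕ)*2 : ℕ) + (2*s₁ + 2*b₁ + (2*s₂ + 2*b₂)) with hpR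
    have hlhs : K₀⁻¹ * (lam ^ (2*(-s₀)) * lam ^ (2*(-b₀))) * ((lam/8)^(n+1) * B)^3
        = cL * lam ^ pL := by
      rw [hcL, hpL]
      rw [div_pow lam 8 (n+1)]
      simp only [Real.rpow_add hlam0, Real.rpow_natCast]
      rw [pow_mul]
      field_simp
    have hrhs : C^2 * (K₁ * (lam ^ (2*s₁) * lam ^ (2*b₁)) * (lam^(n+1) * B))
          * (K₂ * (lam ^ (2*s₂) * lam ^ (2*b₂)) * (lam^(n+1) * B))
        = cR * lam ^ pR := by
      rw [hcR, hpR]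
      simp only [Real.rpow_add hlam0, Real.rpow_natCast]
      rw [pow_mul]
      ring
    rw [hlhs, hrhs] at hkey
    have hlamR : (0:ℝ) < lam ^ pR := Real.rpow_pos_of_pos hlam0 pR
    have hdiv : lam ^ pL / lam ^ pR ≤ cR / cL := by
      rw [div_le_div_iff₀ hlamR hcLpos]
      calc lam ^ pL * cL = cL * lam ^ pL := mul_comm _ _
      _ ≤ cR * lam ^ pR := hkey
    have hexp : lam ^ (((n:ℝ)+1) - 2*(s₀ + s₁ + s₂ + b₀ + b₁ + b₂))
        = lam ^ pL / lam ^ pR := by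
      rw [← Real.rpow_sub hlam0]
      congr 1
      rw [hpL, hpR]
      push_cast
      ring
    rw [hexp, hM]
    exact hdiv
  by_contra hcon
  push_neg at hcon
  have hepos : 0 < ((n:ℝ)+1) - 2*(s₀ + s₁ + s₂ + b₀ + b₁ + b₂) := by linarith
  obtain ⟨lam, hlamM, hlam1⟩ :=
    (((tendsto_rpow_atTop hepos).eventually_gt_atTop M).and
      (Filter.eventually_ge_atTop 1)).exists
  exact absurd (bound lam hlam1) (not_le.mpr hlamM)
end

section
/- Necessity of the Lorentz-invariance (null concentration) condition: If the product estimate ‖uv‖_{H^{−s₀,−b₀}} ≤ C‖u‖_{H^{s₁,b₁}}‖v‖_{H^{s₂,b₂}} holds on ℝ^{1+n} for all Schwartz functions, then s₀ + s₁ + s₂ ≥ (n+1)/4. -/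
open MeasureTheory
open scoped FourierTransform

open MeasureTheory ContDiff SchwartzMap
open scoped RealInnerProductSpace Convolution Pointwise

set_option maxHeartbeats 1600000

namespace PNL

variable {m : ℕ}

noncomputable abbrev Spc (m : ℕ) := EuclideanSpace ℝ (Fin (m + 2))

lemma one_ne_zero' : (1 : Fin (m+2)) ≠ 0 := by simp [Fin.ext_iff]

noncomputable def shearFun (X : Spc m) : Spc m := WithLp.toLp 2 (fun i =>
  if i = 0 then (X 0 + X 1) / Real.sqrt 2
  else if i = 1 then (X 0 - X 1) / Real.sqrt 2
  else X i)

lemma shearFun_zero (X : Spc m) : shearFun X 0 = (X 0 + X 1) / Real.sqrt 2 := by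
  simp [shearFun]

lemma shearFun_one (X : Spc m) : shearFun X 1 = (X 0 - X 1) / Real.sqrt 2 := by
  simp [shearFun, one_ne_zero']

lemma shearFun_other (X : Spc m) (i : Fin (m+2)) (h0 : i ≠ 0) (h1 : i ≠ 1) :
    shearFun X i = X i := by simp [shearFun, h0, h1]

lemma shearFun_invol (X : Spc m) : shearFun (shearFun X) = X := by
  have hs : Real.sqrt 2 * Real.sqrt 2 = 2 := Real.mul_self_sqrt (by norm_num)
  have h2 : Real.sqrt 2 ≠ 0 := by positivity
  ext i
  by_cases h0 : i = 0
  · subst h0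
    rw [show (shearFun (shearFun X)) 0 = _ from shearFun_zero _, shearFun_zero, shearFun_one]
    field_simp
    rw [Real.sq_sqrt (by norm_num : (0:ℝ) ≤ 2)]; ring
  · by_cases h1 : i = 1
    · subst h1
      rw [show (shearFun (shearFun X)) 1 = _ from shearFun_one _, shearFun_zero, shearFun_one]
      field_simp
      rw [Real.sq_sqrt (by norm_num : (0:ℝ) ≤ 2)]; ring
    · rw [shearFun_other _ i h0 h1, shearFun_other _ i h0 h1]

lemma sum_split (h : Fin (m+2) → ℝ) :
    ∑ i, h i = h 0 + h 1 + ∑ i ∈ Finset.univ \ {0, 1}, h i := by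
  have hu : (Finset.univ : Finset (Fin (m+2))) =
      insert 0 (insert 1 (Finset.univ \ {0, 1})) := by
    ext i; simp; tauto
  conv_lhs => rw [hu]
  rw [Finset.sum_insert (by simp [one_ne_zero'.symm]), Finset.sum_insert (by simp)]
  ring

lemma shearFun_sum_sq (X : Spc m) : ∑ i, ‖shearFun X i‖ ^ 2 = ∑ i, ‖X i‖ ^ 2 := by
  have hs : Real.sqrt 2 * Real.sqrt 2 = 2 := Real.mul_self_sqrt (by norm_num)
  have h2 : Real.sqrt 2 ≠ 0 := by positivity
  rw [sum_split (fun i => ‖shearFun X i‖ ^ 2), sum_split (fun i => ‖X i‖ ^ 2)]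
  have htail : ∑ i ∈ Finset.univ \ {0, 1}, ‖shearFun X i‖ ^ 2 =
      ∑ i ∈ Finset.univ \ {0, 1}, ‖X i‖ ^ 2 := by
    refine Finset.sum_congr rfl fun i hi => ?_
    simp only [Finset.mem_sdiff, Finset.mem_insert, Finset.mem_singleton] at hi
    push_neg at hi
    rw [shearFun_other _ i hi.2.1 hi.2.2]
  rw [htail, shearFun_zero, shearFun_one]
  simp only [Real.norm_eq_abs, sq_abs]
  field_simp
  rw [Real.sq_sqrt (by norm_num : (0:ℝ) ≤ 2)]
  ring

noncomputable def shear : Spc m ≃ₗᵢ[ℝ] Spc m where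
  toLinearEquiv :=
  { toFun := shearFun
    invFun := shearFun
    left_inv := shearFun_invol
    right_inv := shearFun_invol
    map_add' := by
      intro X Y; ext i
      simp only [shearFun, PiLp.add_apply, PiLp.toLp_apply]
      split_ifs <;> ring
    map_smul' := by
      intro c X; ext i
      simp only [shearFun, PiLp.toLp_apply, PiLp.smul_apply, smul_eq_mul, RingHom.id_apply]
      split_ifs <;> ring }
  norm_map' := by
    intro X
    show ‖shearFun X‖ = ‖X‖
    rw [EuclideanSpace.norm_eq, EuclideanSpace.norm_eq, shearFun_sum_sq]

lemma shear_apply (X : Spc m) : shear X = shearFun X := rfl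

lemma shear_apply_zero (X : Spc m) : shear X 0 = (X 0 + X 1) / Real.sqrt 2 := by
  rw [shear_apply, shearFun_zero]

lemma shear_apply_one (X : Spc m) : shear X 1 = (X 0 - X 1) / Real.sqrt 2 := by
  rw [shear_apply, shearFun_one]

lemma shear_apply_other (X : Spc m) (i : Fin (m+2)) (h0 : i ≠ 0) (h1 : i ≠ 1) :
    shear X i = X i := by rw [shear_apply, shearFun_other _ i h0 h1]

def box (c r : Fin (m+2) → ℝ) : Set (Spc m) :=
  {X | ∀ i, |shear X i - c i| ≤ r i}

lemma isClosed_box (c r : Fin (m+2) → ℝ) : IsClosed (box c r) := by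
  have : box c r = ⋂ i, {X : Spc m | |shear X i - c i| ≤ r i} := by
    ext X; simp [box, Set.mem_iInter]
  rw [this]
  refine isClosed_iInter fun i => ?_
  have hc : Continuous fun X : Spc m => |shear X i - c i| := by
    have : Continuous fun X : Spc m => shear X i :=
      (PiLp.continuous_apply 2 (fun _ : Fin (m+2) => ℝ) i).comp shear.continuous
    fun_prop
  exact isClosed_le hc continuous_const

lemma measurableSet_box (c r : Fin (m+2) → ℝ) : MeasurableSet (box c r) :=
  (isClosed_box c r).measurableSet

lemma isCompact_box (c r : Fin (m+2) → ℝ) : IsCompact (box c r) := by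
  refine Metric.isCompact_of_isClosed_isBounded (isClosed_box c r) ?_
  refine (Metric.isBounded_closedBall
    (x := (0 : Spc m)) (r := Real.sqrt (∑ i, (|c i| + |r i|) ^ 2))).subset ?_
  intro X hX
  simp only [Metric.mem_closedBall, dist_zero_right]
  have : ‖X‖ = ‖shear X‖ := (shear.norm_map X).symm
  rw [this, EuclideanSpace.norm_eq]
  apply Real.sqrt_le_sqrt
  apply Finset.sum_le_sum
  intro i _
  have h1 : |shear X i - c i| ≤ r i := hX i
  have h2 : |shear X i| ≤ |c i| + |r i| := by
    have := abs_sub_abs_le_abs_sub (shear X i) (c i)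
    have hr : r i ≤ |r i| := le_abs_self _
    linarith
  calc ‖shear X i‖ ^ 2 = |shear X i| ^ 2 := by rw [Real.norm_eq_abs]
    _ ≤ (|c i| + |r i|) ^ 2 := by
        apply sq_le_sq' <;> [linarith [abs_nonneg (shear X i)]; exact h2]

lemma measurableEquiv_apply (Y : Spc m) (i : Fin (m+2)) :
    (MeasurableEquiv.toLp 2 (Fin (m+2) → ℝ)).symm Y i = Y i := rfl

lemma volume_box (c r : Fin (m+2) → ℝ) :
    volume (box c r) = ∏ i, ENNReal.ofReal (2 * r i) := by
  have h1 : box c r = ⇑(shear (m := m)) ⁻¹'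
      ((MeasurableEquiv.toLp 2 (Fin (m+2) → ℝ)).symm ⁻¹'
        (Set.univ.pi fun i => Set.Icc (c i - r i) (c i + r i))) := by
    ext X
    simp only [box, Set.mem_setOf_eq, Set.mem_preimage, Set.mem_pi, Set.mem_univ,
      Set.mem_Icc, forall_true_left, true_implies, measurableEquiv_apply, abs_le]
    constructor
    · exact fun h i => ⟨by linarith [(h i).1], by linarith [(h i).2]⟩
    · exact fun h i => ⟨by linarith [(h i).1], by linarith [(h i).2]⟩
  rw [h1]
  rw [shear.measurePreserving.measure_preimage
    (((MeasurableSet.univ_pi fun i => measurableSet_Icc).preimage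
      (MeasurableEquiv.toLp 2 (Fin (m+2) → ℝ)).symm.measurable)).nullMeasurableSet]
  rw [(EuclideanSpace.volume_preserving_symm_measurableEquiv_toLp (Fin (m+2))).measure_preimage
    ((MeasurableSet.univ_pi fun i => measurableSet_Icc)).nullMeasurableSet]
  rw [volume_pi_pi]
  congr 1
  funext i
  rw [Real.volume_Icc]
  congr 1
  ring



noncomputable def B0 : ContDiffBump (0:ℝ) := ⟨1/2, 1, by norm_num, by norm_num⟩

noncomputable def bumpF (c R x : ℝ) : ℝ := B0 ((x - c)/R)

lemma bumpF_nonneg (c R x : ℝ) : 0 ≤ bumpF c R x := B0.nonneg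
lemma bumpF_le_one (c R x : ℝ) : bumpF c R x ≤ 1 := B0.le_one

lemma bumpF_eq_one (c R x : ℝ) (hR : 0 < R) (h : |x - c| ≤ R/2) : bumpF c R x = 1 := by
  apply B0.one_of_mem_closedBall
  simp only [Metric.mem_closedBall, dist_zero_right, Real.norm_eq_abs]
  show |(x - c)/R| ≤ B0.rIn
  rw [abs_div, abs_of_pos hR]
  rw [div_le_iff₀ hR]
  show |x - c| ≤ 1/2 * R
  linarith

lemma bumpF_eq_zero (c R x : ℝ) (hR : 0 < R) (h : R ≤ |x - c|) : bumpF c R x = 0 := by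
  apply B0.zero_of_le_dist
  simp only [dist_zero_right, Real.norm_eq_abs]
  show B0.rOut ≤ |(x - c)/R|
  rw [abs_div, abs_of_pos hR]
  show (1:ℝ) ≤ _
  rw [le_div_iff₀ hR, one_mul]
  exact h

lemma bumpF_contDiff (c R : ℝ) : ContDiff ℝ ∞ (fun x => bumpF c R x) :=
  B0.contDiff.comp ((contDiff_id.sub contDiff_const).div_const _)

noncomputable def rad (m : ℕ) (l : ℝ) : Fin (m+2) → ℝ := fun i =>
  if i = 0 then l else if i = 1 then 1 else Real.sqrt l

noncomputable def ctr (m : ℕ) (l : ℝ) : Fin (m+2) → ℝ := fun i => if i = 0 then 3*l else 0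

lemma rad_pos {l : ℝ} (hl : 0 < l) (i : Fin (m+2)) : 0 < rad m l i := by
  unfold rad; split_ifs <;> [exact hl; norm_num; exact Real.sqrt_pos.mpr hl]

noncomputable def phi (m : ℕ) (l : ℝ) : Spc m → ℝ := fun X =>
  ∏ i, bumpF (ctr m l i) (rad m l i) (shear X i)

lemma phi_nonneg (l : ℝ) (X : Spc m) : 0 ≤ phi m l X :=
  Finset.prod_nonneg fun i _ => bumpF_nonneg _ _ _

lemma phi_le_one (l : ℝ) (X : Spc m) : phi m l X ≤ 1 :=
  Finset.prod_le_one (fun i _ => bumpF_nonneg _ _ _) (fun i _ => bumpF_le_one _ _ _)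

lemma phi_eq_one {l : ℝ} (hl : 0 < l) (X : Spc m)
    (h : ∀ i, |shear X i - ctr m l i| ≤ rad m l i / 2) : phi m l X = 1 :=
  Finset.prod_eq_one fun i _ => bumpF_eq_one _ _ _ (rad_pos hl i) (h i)

lemma phi_eq_zero {l : ℝ} (hl : 0 < l) (X : Spc m)
    (h : X ∉ box (ctr m l) (rad m l)) : phi m l X = 0 := by
  simp only [box, Set.mem_setOf_eq, not_forall] at h
  obtain ⟨i, hi⟩ := h
  exact Finset.prod_eq_zero (Finset.mem_univ i)
    (bumpF_eq_zero _ _ _ (rad_pos hl i) (le_of_not_ge hi))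

lemma phi_contDiff (l : ℝ) : ContDiff ℝ ∞ (phi m l) := by
  unfold phi
  apply contDiff_prod
  intro i _
  have hs : ContDiff ℝ ∞ (⇑(shear (m := m))) :=
    (LinearMap.toContinuousLinearMap (shear (m := m)).toLinearEquiv.toLinearMap).contDiff
  exact (bumpF_contDiff _ _).comp ((contDiff_euclidean.mp hs) i)

lemma phi_hcs {l : ℝ} (hl : 0 < l) : HasCompactSupport (phi m l) :=
  HasCompactSupport.intro (isCompact_box (ctr m l) (rad m l)) (phi_eq_zero hl)

lemma phi_continuous (l : ℝ) : Continuous (phi m l) := (phi_contDiff l).continuous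

lemma phi_integrable {l : ℝ} (hl : 0 < l) : Integrable (phi m l) volume :=
  (phi_continuous l).integrable_of_hasCompactSupport (phi_hcs hl)

noncomputable def theta (m : ℕ) (l : ℝ) : Spc m → ℝ := fun X =>
  ∫ y, phi m l y * phi m l (X - y)

lemma theta_eq_conv (l : ℝ) :
    theta m l = (phi m l) ⋆[ContinuousLinearMap.mul ℝ ℝ] (phi m l) := by
  funext X; rw [convolution_def]; rfl

lemma theta_hcs {l : ℝ} (hl : 0 < l) : HasCompactSupport (theta m l) := by
  rw [theta_eq_conv]
  exact HasCompactSupport.convolution (L := ContinuousLinearMap.mul ℝ ℝ)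
    (phi_hcs hl) (phi_hcs hl)

lemma theta_contDiff {l : ℝ} (hl : 0 < l) : ContDiff ℝ ∞ (theta m l) := by
  rw [theta_eq_conv]
  exact HasCompactSupport.contDiff_convolution_right _ (phi_hcs hl)
    ((phi_integrable hl).locallyIntegrable) (phi_contDiff l)

lemma theta_nonneg (l : ℝ) (X : Spc m) : 0 ≤ theta m l X :=
  integral_nonneg fun y => mul_nonneg (phi_nonneg _ _) (phi_nonneg _ _)

lemma theta_ge {l : ℝ} (hl : 0 < l) (X : Spc m)
    (hX : ∀ i, |shear X i - 2 * ctr m l i| ≤ rad m l i / 4) :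
    (volume (box (ctr m l) (fun i => rad m l i / 4))).toReal ≤ theta m l X := by
  set S4 : Set (Spc m) := box (ctr m l) (fun i => rad m l i / 4) with hS4
  have hpoint : ∀ y, S4.indicator (fun _ => (1:ℝ)) y ≤ phi m l y * phi m l (X - y) := by
    intro y
    by_cases hy : y ∈ S4
    · rw [Set.indicator_of_mem hy]
      have h1 : phi m l y = 1 := phi_eq_one hl y fun i => by
        have := hy i
        have hr := (rad_pos (m := m) hl i).le
        linarith [abs_nonneg (shear y i - ctr m l i)]
      have h2 : phi m l (X - y) = 1 := by
        apply phi_eq_one hl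
        intro i
        have e : shear (X - y) i = shear X i - shear y i := by
          rw [map_sub]; rfl
        rw [e]
        have h3 := hX i
        have h4 := hy i
        calc |shear X i - shear y i - ctr m l i|
            = |(shear X i - 2 * ctr m l i) - (shear y i - ctr m l i)| := by ring_nf
          _ ≤ |shear X i - 2 * ctr m l i| + |shear y i - ctr m l i| := abs_sub _ _
          _ ≤ rad m l i / 4 + rad m l i / 4 := add_le_add h3 h4
          _ = rad m l i / 2 := by ring
      rw [h1, h2]; norm_num
    · rw [Set.indicator_of_notMem hy]
      exact mul_nonneg (phi_nonneg _ _) (phi_nonneg _ _)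
  have hint1 : Integrable (S4.indicator (fun _ => (1:ℝ))) volume := by
    refine (IntegrableOn.integrable_indicator ?_ (measurableSet_box _ _))
    exact integrableOn_const (isCompact_box _ _).measure_lt_top.ne
  have hint2 : Integrable (fun y => phi m l y * phi m l (X - y)) volume := by
    apply Continuous.integrable_of_hasCompactSupport
    · exact (phi_continuous l).mul ((phi_continuous l).comp (continuous_const.sub continuous_id))
    · apply HasCompactSupport.mul_right
      exact phi_hcs hl
  calc (volume S4).toReal = ∫ y, S4.indicator (fun _ => (1:ℝ)) y := by
        rw [integral_indicator_const _ (measurableSet_box _ _)]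
        simp [measureReal_def, hS4]
    _ ≤ theta m l X := integral_mono hint1 hint2 hpoint


/-- smooth compactly supported functions are Schwartz -/
noncomputable def mkS (g : Spc m → ℂ) (h1 : ContDiff ℝ ∞ g) (h2 : HasCompactSupport g) :
    𝓢(Spc m, ℂ) := by
  refine ⟨g, h1, fun k j => ?_⟩
  have hcont : Continuous fun x : Spc m => ‖x‖ ^ k * ‖iteratedFDeriv ℝ j g x‖ :=
    ((continuous_norm.pow k).mul (h1.continuous_iteratedFDeriv (by exact_mod_cast le_top)).norm)
  have hsupp : HasCompactSupport fun x : Spc m => ‖x‖ ^ k * ‖iteratedFDeriv ℝ j g x‖ :=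
    HasCompactSupport.mul_left ((h2.iteratedFDeriv j).norm)
  obtain ⟨C, hC⟩ := hsupp.exists_bound_of_continuous hcont
  exact ⟨C, fun x => by
    have := hC x
    rwa [Real.norm_eq_abs, abs_of_nonneg (by positivity)] at this⟩

@[simp] lemma mkS_coe (g : Spc m → ℂ) (h1 h2) : ⇑(mkS g h1 h2) = g := rfl


/-- The inverse Fourier transform of a convolution of nice functions is the
pointwise product of the inverse Fourier transforms. -/
lemma fourierInv_conv (g h : Spc m → ℂ) (hgc : Continuous g) (hgs : HasCompactSupport g)
    (hhc : Continuous h) (hhs : HasCompactSupport h) (x : Spc m) :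
    𝓕⁻ (fun z => ∫ y, g y * h (z - y)) x = 𝓕⁻ g x * 𝓕⁻ h x := by
  have key : ∀ (f : Spc m → ℂ), 𝓕⁻ f x = ∫ v, (Real.fourierChar ⟪v, x⟫ : ℂ) * f v := by
    intro f
    rw [Real.fourierInv_eq]; rfl
  rw [key, key, key]
  have hmul : ∀ c : ℂ, ∀ f : Spc m → ℂ, ∫ v, c * f v = c * ∫ v, f v := by
    intro c f
    rw [show (fun v : Spc m => c * f v) = fun v => c • f v from rfl, integral_smul, smul_eq_mul]
  calc ∫ z, (Real.fourierChar ⟪z, x⟫ : ℂ) * ∫ y, g y * h (z - y)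
      = ∫ z, ∫ y, (Real.fourierChar ⟪z, x⟫ : ℂ) * (g y * h (z - y)) := by
        congr 1; funext z
        rw [hmul]
    _ = ∫ y, ∫ z, (Real.fourierChar ⟪z, x⟫ : ℂ) * (g y * h (z - y)) := by
        apply integral_integral_swap
        have hF : Continuous fun p : Spc m × Spc m =>
            (Real.fourierChar ⟪p.1, x⟫ : ℂ) * (g p.2 * h (p.1 - p.2)) := by
          apply Continuous.mul
          · exact continuous_subtype_val.comp
              (Real.continuous_fourierChar.comp (continuous_fst.inner continuous_const))
          · exact (hgc.comp continuous_snd).mul (hhc.comp (continuous_fst.sub continuous_snd))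
        exact hF.integrable_of_hasCompactSupport (by
          apply HasCompactSupport.intro
            (((hhs.isCompact.add hgs.isCompact)).prod hgs.isCompact)
          intro p hp
          simp only [Set.mem_prod, not_and_or] at hp
          by_cases hy : p.2 ∈ tsupport g
          · have h1 : p.1 ∉ tsupport h + tsupport g := by tauto
            have h2 : p.1 - p.2 ∉ tsupport h := by
              intro hmem
              exact h1 (by
                have e : p.1 = (p.1 - p.2) + p.2 := by abel
                rw [e]; exact Set.add_mem_add hmem hy)
            rw [image_eq_zero_of_notMem_tsupport h2, mul_zero, mul_zero]
          · rw [image_eq_zero_of_notMem_tsupport hy, zero_mul, mul_zero])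
    _ = ∫ y, ∫ z, (Real.fourierChar ⟪z + y, x⟫ : ℂ) * (g y * h z) := by
        congr 1; funext y
        rw [← integral_add_right_eq_self
          (fun z => (Real.fourierChar ⟪z, x⟫ : ℂ) * (g y * h (z - y))) y]
        simp
    _ = ∫ y, ((Real.fourierChar ⟪y, x⟫ : ℂ) * g y) * ∫ z, (Real.fourierChar ⟪z, x⟫ : ℂ) * h z := by
        congr 1; funext y
        rw [← hmul]
        congr 1; funext z
        rw [inner_add_left, AddChar.map_add_eq_mul]
        push_cast
        ring
    _ = (∫ y, (Real.fourierChar ⟪y, x⟫ : ℂ) * g y) * ∫ z, (Real.fourierChar ⟪z, x⟫ : ℂ) * h z := by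
        rw [integral_mul_const]

lemma rpow_le_max {A B x s : ℝ} (hA : 0 < A) (h1 : A ≤ x) (h2 : x ≤ B) :
    x ^ s ≤ max (A ^ s) (B ^ s) := by
  rcases le_total 0 s with hs | hs
  · exact le_max_of_le_right (Real.rpow_le_rpow (hA.trans_le h1).le h2 hs)
  · exact le_max_of_le_left (Real.rpow_le_rpow_of_nonpos hA h1 hs)

lemma min_le_rpow {A B x s : ℝ} (hA : 0 < A) (h1 : A ≤ x) (h2 : x ≤ B) :
    min (A ^ s) (B ^ s) ≤ x ^ s := by
  rcases le_total 0 s with hs | hs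
  · exact min_le_of_left_le (Real.rpow_le_rpow hA.le h1 hs)
  · exact min_le_of_right_le (Real.rpow_le_rpow_of_nonpos (hA.trans_le h1) h2 hs)

lemma succ_zero_eq_one : ((0 : Fin (m+1)).succ) = (1 : Fin (m+2)) := by
  simp [Fin.ext_iff]

lemma spatialNorm_nonneg (X : Spc m) : 0 ≤ spatialNorm (n := m+1) X := Real.sqrt_nonneg _

lemma spatial_sq (X : Spc m) : spatialNorm (n := m+1) X ^ 2 =
    (X 1)^2 + ∑ i ∈ (Finset.univ : Finset (Fin (m+1))).erase 0, (X i.succ)^2 := by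
  rw [spatialNorm, Real.sq_sqrt (Finset.sum_nonneg fun i _ => sq_nonneg _)]
  rw [← Finset.add_sum_erase _ _ (Finset.mem_univ (0 : Fin (m+1))), succ_zero_eq_one]

/-- All quantitative facts about points in the concentration region. -/
lemma weight_facts {l : ℝ} (hl : 8 ≤ l) (hm : (m:ℝ)+2 ≤ l) (X : Spc m)
    (h0lo : 2*l ≤ shear X 0) (h0hi : shear X 0 ≤ 7*l)
    (h1 : |shear X 1| ≤ 3/2)
    (hi : ∀ i : Fin (m+1), i ≠ 0 → |X i.succ| ≤ Real.sqrt l) :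
    l^2/4 ≤ 1 + spatialNorm (n := m+1) X ^ 2 ∧
    1 + spatialNorm (n := m+1) X ^ 2 ≤ 50 * l^2 ∧
    (|X 0| - spatialNorm (n := m+1) X)^2 ≤ ((m:ℝ)+5)^2 := by
  have hsqrt2_lb : (1:ℝ) ≤ Real.sqrt 2 := by
    rw [show (1:ℝ) = Real.sqrt 1 by simp]
    exact Real.sqrt_le_sqrt (by norm_num)
  have hsqrt2_ub : Real.sqrt 2 ≤ 3/2 := by
    rw [show (3/2:ℝ) = Real.sqrt ((3/2)^2) by rw [Real.sqrt_sq]; norm_num]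
    exact Real.sqrt_le_sqrt (by norm_num)
  have hs2pos : (0:ℝ) < Real.sqrt 2 := by linarith
  set τ := X 0 with hτ
  set ξ₁ := X 1 with hξ
  have e0 : shear X 0 = (τ + ξ₁)/Real.sqrt 2 := shear_apply_zero X
  have e1 : shear X 1 = (τ - ξ₁)/Real.sqrt 2 := shear_apply_one X
  -- bounds on τ+ξ₁ and τ-ξ₁
  have hsum_lo : 2*l ≤ τ + ξ₁ := by
    have : τ + ξ₁ = Real.sqrt 2 * shear X 0 := by rw [e0]; field_simp
    rw [this]
    nlinarith [h0lo, hsqrt2_lb, hl]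
  have hsum_hi : τ + ξ₁ ≤ 11 * l := by
    have : τ + ξ₁ = Real.sqrt 2 * shear X 0 := by rw [e0]; field_simp
    rw [this]
    nlinarith [h0hi, hsqrt2_ub, hsqrt2_lb, h0lo, hl]
  have hdiff : |τ - ξ₁| ≤ 3 := by
    have : τ - ξ₁ = Real.sqrt 2 * shear X 1 := by rw [e1]; field_simp
    rw [this, abs_mul, abs_of_pos hs2pos]
    nlinarith [abs_nonneg (shear X 1), h1, hsqrt2_ub]
  have hdiff1 := abs_le.mp hdiff
  have hξlo : l/2 ≤ ξ₁ := by linarith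
  have hξhi : ξ₁ ≤ 6*l := by linarith
  have hτpos : 0 ≤ τ := by linarith
  -- tail sum bound
  have htail : ∑ i ∈ (Finset.univ : Finset (Fin (m+1))).erase 0, (X i.succ)^2 ≤ (m:ℝ) * l := by
    calc ∑ i ∈ (Finset.univ : Finset (Fin (m+1))).erase 0, (X i.succ)^2
        ≤ ∑ _i ∈ (Finset.univ : Finset (Fin (m+1))).erase 0, l := by
          apply Finset.sum_le_sum
          intro i hif
          have hi0 : i ≠ 0 := (Finset.mem_erase.mp hif).1
          have := hi i hi0
          have h2 : (X i.succ)^2 ≤ (Real.sqrt l)^2 := by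
            rw [← sq_abs]
            apply sq_le_sq' <;> nlinarith [abs_nonneg (X i.succ), Real.sqrt_nonneg l]
          rwa [Real.sq_sqrt (by linarith : (0:ℝ) ≤ l)] at h2
      _ = (m:ℝ) * l := by
          rw [Finset.sum_const, Finset.card_erase_of_mem (Finset.mem_univ _)]
          simp [nsmul_eq_mul]
  have htail_nonneg : 0 ≤ ∑ i ∈ (Finset.univ : Finset (Fin (m+1))).erase 0, (X i.succ)^2 :=
    Finset.sum_nonneg fun i _ => sq_nonneg _
  have hsp_sq := spatial_sq X
  set sp := spatialNorm (n := m+1) X with hsp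
  have hsp_nonneg : 0 ≤ sp := spatialNorm_nonneg X
  -- sp ≥ ξ₁, sp ≤ ξ₁ + (m+2)
  have hsp_ge : ξ₁ ≤ sp := by
    nlinarith [hsp_sq, htail_nonneg, hξlo, hl, hsp_nonneg]
  have hml : (m:ℝ) * l ≤ 2*((m:ℝ)+2)*ξ₁ := by
    nlinarith [hξlo, Nat.cast_nonneg (α := ℝ) m, hl]
  have hsp_le : sp ≤ ξ₁ + ((m:ℝ)+2) := by
    nlinarith [hsp_sq, htail, hml, hsp_nonneg, hξlo, Nat.cast_nonneg (α := ℝ) m]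
  constructor
  · -- l²/4 ≤ 1 + sp²
    nlinarith [hsp_ge, hξlo, hl]
  constructor
  · -- 1 + sp² ≤ 50 l²
    have hsp_le7 : sp ≤ 7*l := by linarith
    nlinarith [hsp_nonneg, hl]
  · -- (|τ| - sp)² ≤ (m+5)²
    rw [abs_of_nonneg hτpos]
    have hlow : -((m:ℝ)+5) ≤ τ - sp := by linarith
    have hhigh : τ - sp ≤ (m:ℝ)+5 := by
      have : τ - sp ≤ τ - ξ₁ := by linarith
      have h5 : τ - ξ₁ ≤ 3 := hdiff1.2
      have : (3:ℝ) ≤ (m:ℝ)+5 := by nlinarith [Nat.cast_nonneg (α := ℝ) m]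
      linarith
    nlinarith [hlow, hhigh, Nat.cast_nonneg (α := ℝ) m]

/-- Upper bound for the wave weight on the concentration region. -/
lemma weight_le {l : ℝ} (hl : 8 ≤ l) (hm : (m:ℝ)+2 ≤ l) (X : Spc m)
    (h0lo : 2*l ≤ shear X 0) (h0hi : shear X 0 ≤ 7*l)
    (h1 : |shear X 1| ≤ 3/2)
    (hi : ∀ i : Fin (m+1), i ≠ 0 → |X i.succ| ≤ Real.sqrt l) (s b : ℝ) :
    waveWeight (n := m+1) s b X ≤
      (max ((4:ℝ)⁻¹ ^ s) ((50:ℝ) ^ s) * max 1 ((1+((m:ℝ)+5)^2) ^ b)) * (l^2) ^ s := by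
  obtain ⟨hx1, hx2, hx3⟩ := weight_facts hl hm X h0lo h0hi h1 hi
  have hA : (0:ℝ) < l^2 := by positivity
  have hfac1 : (1 + spatialNorm (n := m+1) X ^ 2) ^ s ≤
      (l^2) ^ s * max ((4:ℝ)⁻¹ ^ s) ((50:ℝ) ^ s) := by
    have := rpow_le_max (A := l^2/4) (B := 50*l^2) (x := 1 + spatialNorm (n := m+1) X ^ 2)
      (s := s) (by positivity) hx1 hx2
    calc (1 + spatialNorm (n := m+1) X ^ 2) ^ s ≤ max ((l^2/4) ^ s) ((50*l^2) ^ s) := this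
      _ = (l^2) ^ s * max ((4:ℝ)⁻¹ ^ s) ((50:ℝ) ^ s) := by
          rw [show l^2/4 = l^2 * 4⁻¹ by ring, Real.mul_rpow hA.le (by norm_num),
            show (50:ℝ)*l^2 = l^2 * 50 by ring, Real.mul_rpow hA.le (by norm_num)]
          rw [mul_max_of_nonneg _ _ (Real.rpow_nonneg hA.le s)]
  have hfac2 : (1 + (|X 0| - spatialNorm (n := m+1) X) ^ 2) ^ b ≤ max 1 ((1+((m:ℝ)+5)^2) ^ b) := by
    have h := rpow_le_max (A := (1:ℝ)) (B := 1+((m:ℝ)+5)^2)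
      (x := 1 + (|X 0| - spatialNorm (n := m+1) X) ^ 2) (s := b)
      one_pos (by nlinarith [sq_nonneg (|X 0| - spatialNorm (n := m+1) X)]) (by linarith)
    rwa [Real.one_rpow] at h
  calc waveWeight (n := m+1) s b X
      ≤ ((l^2) ^ s * max ((4:ℝ)⁻¹ ^ s) ((50:ℝ) ^ s)) * max 1 ((1+((m:ℝ)+5)^2) ^ b) := by
        apply mul_le_mul hfac1 hfac2 (Real.rpow_nonneg (by nlinarith [sq_nonneg (|X 0| - spatialNorm (n := m+1) X)]) b)
        positivity
    _ = (max ((4:ℝ)⁻¹ ^ s) ((50:ℝ) ^ s) * max 1 ((1+((m:ℝ)+5)^2) ^ b)) * (l^2) ^ s := by ring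

/-- Lower bound for the wave weight on the concentration region. -/
lemma weight_ge {l : ℝ} (hl : 8 ≤ l) (hm : (m:ℝ)+2 ≤ l) (X : Spc m)
    (h0lo : 2*l ≤ shear X 0) (h0hi : shear X 0 ≤ 7*l)
    (h1 : |shear X 1| ≤ 3/2)
    (hi : ∀ i : Fin (m+1), i ≠ 0 → |X i.succ| ≤ Real.sqrt l) (s b : ℝ) :
    (min ((4:ℝ)⁻¹ ^ s) ((50:ℝ) ^ s) * min 1 ((1+((m:ℝ)+5)^2) ^ b)) * (l^2) ^ s ≤
      waveWeight (n := m+1) s b X := by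
  obtain ⟨hx1, hx2, hx3⟩ := weight_facts hl hm X h0lo h0hi h1 hi
  have hA : (0:ℝ) < l^2 := by positivity
  have hfac1 : (l^2) ^ s * min ((4:ℝ)⁻¹ ^ s) ((50:ℝ) ^ s) ≤
      (1 + spatialNorm (n := m+1) X ^ 2) ^ s := by
    have := min_le_rpow (A := l^2/4) (B := 50*l^2) (x := 1 + spatialNorm (n := m+1) X ^ 2)
      (s := s) (by positivity) hx1 hx2
    calc (l^2) ^ s * min ((4:ℝ)⁻¹ ^ s) ((50:ℝ) ^ s)
        = min ((l^2/4) ^ s) ((50*l^2) ^ s) := by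
          rw [show l^2/4 = l^2 * 4⁻¹ by ring, Real.mul_rpow hA.le (by norm_num),
            show (50:ℝ)*l^2 = l^2 * 50 by ring, Real.mul_rpow hA.le (by norm_num)]
          rw [mul_min_of_nonneg _ _ (Real.rpow_nonneg hA.le s)]
      _ ≤ _ := this
  have hfac2 : min 1 ((1+((m:ℝ)+5)^2) ^ b) ≤
      (1 + (|X 0| - spatialNorm (n := m+1) X) ^ 2) ^ b := by
    have h := min_le_rpow (A := (1:ℝ)) (B := 1+((m:ℝ)+5)^2)
      (x := 1 + (|X 0| - spatialNorm (n := m+1) X) ^ 2) (s := b)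
      one_pos (by nlinarith [sq_nonneg (|X 0| - spatialNorm (n := m+1) X)]) (by linarith)
    rwa [Real.one_rpow] at h
  calc (min ((4:ℝ)⁻¹ ^ s) ((50:ℝ) ^ s) * min 1 ((1+((m:ℝ)+5)^2) ^ b)) * (l^2) ^ s
      = ((l^2) ^ s * min ((4:ℝ)⁻¹ ^ s) ((50:ℝ) ^ s)) * min 1 ((1+((m:ℝ)+5)^2) ^ b) := by ring
    _ ≤ (1 + spatialNorm (n := m+1) X ^ 2) ^ s * (1 + (|X 0| - spatialNorm (n := m+1) X) ^ 2) ^ b := by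
        apply mul_le_mul hfac1 hfac2 ?_ (Real.rpow_nonneg ?_ s)
        · exact le_min (by positivity) (Real.rpow_nonneg (by positivity) b)
        · nlinarith [sq_nonneg (spatialNorm (n := m+1) X)]
    _ = waveWeight (n := m+1) s b X := rfl

section Stage5
variable {m : ℕ} {l : ℝ}

lemma ctr_zero (l : ℝ) : ctr m l 0 = 3*l := by simp [ctr]
lemma ctr_one (l : ℝ) : ctr m l 1 = 0 := by simp [ctr, one_ne_zero']
lemma ctr_other (l : ℝ) (i : Fin (m+2)) (h0 : i ≠ 0) : ctr m l i = 0 := by simp [ctr, h0]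
lemma rad_zero (l : ℝ) : rad m l 0 = l := by simp [rad]
lemma rad_one (l : ℝ) : rad m l 1 = 1 := by simp [rad, one_ne_zero']
lemma rad_other (l : ℝ) (i : Fin (m+2)) (h0 : i ≠ 0) (h1 : i ≠ 1) :
    rad m l i = Real.sqrt l := by simp [rad, h0, h1]

lemma succ_ne_one {i : Fin (m+1)} (h : i ≠ 0) : (i.succ : Fin (m+2)) ≠ 1 := by
  intro he
  apply h
  exact Fin.succ_injective _ (he.trans succ_zero_eq_one.symm)

/-- Membership in the support box gives the weight-estimate hypotheses. -/
lemma box_supp_hyp (hl : 8 ≤ l) (X : Spc m) (hX : X ∈ box (ctr m l) (rad m l)) :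
    2*l ≤ shear X 0 ∧ shear X 0 ≤ 7*l ∧ |shear X 1| ≤ 3/2 ∧
      ∀ i : Fin (m+1), i ≠ 0 → |X i.succ| ≤ Real.sqrt l := by
  have h0 := hX 0
  rw [ctr_zero, rad_zero] at h0
  have h0' := abs_le.mp h0
  have h1 := hX 1
  rw [ctr_one, rad_one, sub_zero] at h1
  refine ⟨by linarith [h0'.1], by linarith [h0'.2], by linarith, ?_⟩
  intro i hi
  have hs0 : (i.succ : Fin (m+2)) ≠ 0 := Fin.succ_ne_zero i
  have hs1 : (i.succ : Fin (m+2)) ≠ 1 := succ_ne_one hi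
  have h2 := hX i.succ
  rw [ctr_other _ _ hs0, rad_other _ _ hs0 hs1, sub_zero,
    shear_apply_other _ _ hs0 hs1] at h2
  exact h2

/-- Membership in the doubled (product) box gives the weight-estimate hypotheses. -/
lemma box_G_hyp (hl : 8 ≤ l) (X : Spc m)
    (hX : X ∈ box (fun i => 2 * ctr m l i) (fun i => rad m l i / 4)) :
    2*l ≤ shear X 0 ∧ shear X 0 ≤ 7*l ∧ |shear X 1| ≤ 3/2 ∧
      ∀ i : Fin (m+1), i ≠ 0 → |X i.succ| ≤ Real.sqrt l := by
  have h0 : |shear X 0 - 2*(3*l)| ≤ l/4 := by simpa [ctr_zero, rad_zero] using hX 0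
  have h0' := abs_le.mp h0
  have h1 : |shear X 1| ≤ 1/4 := by simpa [ctr_one, rad_one] using hX 1
  refine ⟨by linarith [h0'.1], by linarith [h0'.2], by linarith, ?_⟩
  intro i hi
  have hs0 : (i.succ : Fin (m+2)) ≠ 0 := Fin.succ_ne_zero i
  have hs1 : (i.succ : Fin (m+2)) ≠ 1 := succ_ne_one hi
  have h2 : |shear X i.succ| ≤ Real.sqrt l / 4 := by
    simpa [ctr_other _ _ hs0, rad_other _ _ hs0 hs1] using hX i.succ
  rw [shear_apply_other _ _ hs0 hs1] at h2
  have : (0:ℝ) ≤ Real.sqrt l := Real.sqrt_nonneg l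
  calc |X i.succ| ≤ Real.sqrt l / 4 := h2
    _ ≤ Real.sqrt l := by linarith

lemma prod_split (h : Fin (m+2) → ℝ) :
    ∏ i, h i = h 0 * h 1 * ∏ i ∈ Finset.univ \ {0, 1}, h i := by
  have hu : (Finset.univ : Finset (Fin (m+2))) =
      insert 0 (insert 1 (Finset.univ \ {0, 1})) := by
    ext i; simp; tauto
  conv_lhs => rw [hu]
  rw [Finset.prod_insert (by simp [one_ne_zero'.symm]), Finset.prod_insert (by simp)]
  ring

lemma card_sdiff_01 : (Finset.univ \ ({0, 1} : Finset (Fin (m+2)))).card = m := by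
  rw [Finset.card_sdiff_of_subset (Finset.subset_univ _)]
  have : ({0, 1} : Finset (Fin (m+2))).card = 2 := by
    rw [Finset.card_insert_of_notMem (by simp [one_ne_zero'.symm]), Finset.card_singleton]
  simp [this]

lemma prod_rad (hl : 0 < l) : ∏ i, rad m l i = l * Real.sqrt l ^ m := by
  rw [prod_split (rad m l), rad_zero, rad_one]
  have ht : ∏ i ∈ Finset.univ \ ({0,1} : Finset (Fin (m+2))), rad m l i
      = Real.sqrt l ^ m := by
    have hcg : ∀ i ∈ Finset.univ \ ({0,1} : Finset (Fin (m+2))), rad m l i = Real.sqrt l := by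
      intro i hi
      simp only [Finset.mem_sdiff, Finset.mem_insert, Finset.mem_singleton] at hi
      push_neg at hi
      exact rad_other l i hi.2.1 hi.2.2
    rw [Finset.prod_congr rfl hcg, Finset.prod_const, card_sdiff_01]
  rw [ht]
  ring

/-- Volume of the scaled box. -/
lemma vol_box_toReal (hl : 0 < l) (c : Fin (m+2) → ℝ) (rfac : ℝ) (hr : 0 < rfac) :
    (volume (box c (fun i => rad m l i * rfac))).toReal
      = (2*rfac)^(m+2) * (l * Real.sqrt l ^ m) := by
  rw [volume_box]
  have hnn : ∀ i ∈ Finset.univ, (0:ℝ) ≤ 2 * (rad m l i * rfac) := fun i _ =>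
    mul_nonneg (by norm_num) (mul_nonneg (rad_pos hl i).le hr.le)
  rw [← ENNReal.ofReal_prod_of_nonneg hnn, ENNReal.toReal_ofReal
    (Finset.prod_nonneg hnn)]
  have : ∀ i, 2 * (rad m l i * rfac) = rad m l i * (2 * rfac) := fun i => by ring
  calc ∏ i, 2 * (rad m l i * rfac) = ∏ i, rad m l i * (2*rfac) := by
        exact Finset.prod_congr rfl fun i _ => this i
    _ = (∏ i, rad m l i) * (2*rfac)^(m+2) := by
        rw [Finset.prod_mul_distrib, Finset.prod_const, Finset.card_univ]
        simp
    _ = (2*rfac)^(m+2) * (l * Real.sqrt l ^ m) := by rw [prod_rad hl]; ring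

lemma waveWeight_nonneg (s b : ℝ) (X : Spc m) : 0 ≤ waveWeight (n := m+1) s b X :=
  mul_nonneg (Real.rpow_nonneg (by positivity) s) (Real.rpow_nonneg (by positivity) b)

lemma spatialNorm_continuous : Continuous fun X : Spc m => spatialNorm (n := m+1) X := by
  apply Real.continuous_sqrt.comp
  exact continuous_finset_sum _ fun i _ => (PiLp.continuous_apply 2 (fun _ : Fin (m+2) => ℝ) (i.succ : Fin (m+2))).pow 2

lemma waveWeight_continuous (s b : ℝ) :
    Continuous fun X : Spc m => waveWeight (n := m+1) s b X := by
  have h1 : Continuous fun X : Spc m => (1 + spatialNorm (n := m+1) X ^ 2) ^ s := by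
    apply Continuous.rpow_const
    · exact continuous_const.add (spatialNorm_continuous.pow 2)
    · intro X; left; positivity
  have h2 : Continuous fun X : Spc m =>
      (1 + (|X 0| - spatialNorm (n := m+1) X) ^ 2) ^ b := by
    apply Continuous.rpow_const
    · exact continuous_const.add
        (((PiLp.continuous_apply 2 (fun _ : Fin (m+2) => ℝ) (0 : Fin (m+2))).abs.sub spatialNorm_continuous).pow 2)
    · intro X; left; positivity
  exact h1.mul h2

/-- Upper bound for the squared wave-Sobolev norm of `phi`. -/
lemma integral_phi_le (hl : 8 ≤ l) (hm : (m:ℝ)+2 ≤ l) (s b : ℝ) :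
    ∫ X : Spc m, waveWeight (n := m+1) s b X * ‖((phi m l X : ℝ) : ℂ)‖^2 ≤
      (max ((4:ℝ)⁻¹ ^ s) ((50:ℝ) ^ s) * max 1 ((1+((m:ℝ)+5)^2) ^ b) * (l^2) ^ s) *
        (volume (box (ctr m l) (rad m l))).toReal := by
  have hl0 : 0 < l := by linarith
  set S := box (ctr m l) (rad m l) with hS
  set K := max ((4:ℝ)⁻¹ ^ s) ((50:ℝ) ^ s) * max 1 ((1+((m:ℝ)+5)^2) ^ b) * (l^2) ^ s with hK
  have hKnn : 0 ≤ K := by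
    apply mul_nonneg (mul_nonneg ?_ ?_) (Real.rpow_nonneg (by positivity) s)
    · exact le_max_iff.mpr (Or.inl (Real.rpow_nonneg (by norm_num) s))
    · exact le_max_iff.mpr (Or.inl zero_le_one)
  have hpt : ∀ X : Spc m, waveWeight (n := m+1) s b X * ‖((phi m l X : ℝ) : ℂ)‖^2 ≤
      S.indicator (fun _ => K) X := by
    intro X
    by_cases hX : X ∈ S
    · rw [Set.indicator_of_mem hX]
      obtain ⟨ha, hb', hc, hd⟩ := box_supp_hyp hl X hX
      have hW := weight_le hl hm X ha hb' hc hd s b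
      have hφ : ‖((phi m l X : ℝ) : ℂ)‖^2 ≤ 1 := by
        rw [Complex.norm_real, Real.norm_eq_abs, abs_of_nonneg (phi_nonneg l X)]
        exact pow_le_one₀ (phi_nonneg l X) (phi_le_one l X)
      calc waveWeight (n := m+1) s b X * ‖((phi m l X : ℝ) : ℂ)‖^2
          ≤ waveWeight (n := m+1) s b X * 1 := by
            apply mul_le_mul_of_nonneg_left hφ (waveWeight_nonneg s b X)
        _ = waveWeight (n := m+1) s b X := mul_one _
        _ ≤ K := hW
    · rw [Set.indicator_of_notMem hX, phi_eq_zero hl0 X hX]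
      simp
  have hint2 : Integrable (S.indicator (fun _ => K)) volume :=
    (IntegrableOn.integrable_indicator
      (integrableOn_const (isCompact_box _ _).measure_lt_top.ne)
      (measurableSet_box _ _))
  have hint1 : Integrable
      (fun X : Spc m => waveWeight (n := m+1) s b X * ‖((phi m l X : ℝ) : ℂ)‖^2) volume := by
    apply Continuous.integrable_of_hasCompactSupport
    · exact (waveWeight_continuous s b).mul
        (((Complex.continuous_ofReal.comp (phi_continuous l)).norm).pow 2)
    · apply HasCompactSupport.mul_left
      apply HasCompactSupport.comp_left (g := fun r : ℂ => ‖r‖^2) ?_ (by simp)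
      exact (phi_hcs hl0).comp_left (g := fun r : ℝ => (r : ℂ)) (by simp)
  calc ∫ X : Spc m, waveWeight (n := m+1) s b X * ‖((phi m l X : ℝ) : ℂ)‖^2
      ≤ ∫ X : Spc m, S.indicator (fun _ => K) X := integral_mono hint1 hint2 hpt
    _ = K * (volume S).toReal := by
        rw [integral_indicator_const _ (measurableSet_box _ _)]
        simp [mul_comm, measureReal_def, hS]

/-- Lower bound for the squared wave-Sobolev norm of `theta`. -/
lemma integral_theta_ge (hl : 8 ≤ l) (hm : (m:ℝ)+2 ≤ l) (s b : ℝ) :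
    (min ((4:ℝ)⁻¹ ^ s) ((50:ℝ) ^ s) * min 1 ((1+((m:ℝ)+5)^2) ^ b) * (l^2) ^ s) *
        ((volume (box (ctr m l) (fun i => rad m l i / 4))).toReal)^2 *
        (volume (box (fun i => 2 * ctr m l i) (fun i => rad m l i / 4))).toReal ≤
      ∫ X : Spc m, waveWeight (n := m+1) s b X * ‖((theta m l X : ℝ) : ℂ)‖^2 := by
  have hl0 : 0 < l := by linarith
  set G := box (fun i => 2 * ctr m l i) (fun i => rad m l i / 4) with hG
  set q := (volume (box (ctr m l) (fun i => rad m l i / 4))).toReal with hq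
  have hqnn : 0 ≤ q := ENNReal.toReal_nonneg
  set k := min ((4:ℝ)⁻¹ ^ s) ((50:ℝ) ^ s) * min 1 ((1+((m:ℝ)+5)^2) ^ b) * (l^2) ^ s with hk
  have hknn : 0 ≤ k := by
    apply mul_nonneg (mul_nonneg ?_ ?_) (Real.rpow_nonneg (by positivity) s)
    · exact le_min (Real.rpow_nonneg (by norm_num) s) (Real.rpow_nonneg (by norm_num) s)
    · exact le_min zero_le_one (Real.rpow_nonneg (by positivity) b)
  have hpt : ∀ X : Spc m, G.indicator (fun _ => k * q^2) X ≤
      waveWeight (n := m+1) s b X * ‖((theta m l X : ℝ) : ℂ)‖^2 := by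
    intro X
    by_cases hX : X ∈ G
    · rw [Set.indicator_of_mem hX]
      obtain ⟨ha, hb', hc, hd⟩ := box_G_hyp hl X hX
      have hW := weight_ge hl hm X ha hb' hc hd s b
      have hθ : q ≤ theta m l X := theta_ge hl0 X hX
      have hθ2 : q^2 ≤ ‖((theta m l X : ℝ) : ℂ)‖^2 := by
        rw [Complex.norm_real, Real.norm_eq_abs, abs_of_nonneg (theta_nonneg l X)]
        exact pow_le_pow_left₀ hqnn hθ 2
      calc k * q^2 ≤ waveWeight (n := m+1) s b X * q^2 :=
            mul_le_mul_of_nonneg_right hW (by positivity)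
        _ ≤ waveWeight (n := m+1) s b X * ‖((theta m l X : ℝ) : ℂ)‖^2 :=
            mul_le_mul_of_nonneg_left hθ2 (waveWeight_nonneg s b X)
    · rw [Set.indicator_of_notMem hX]
      exact mul_nonneg (waveWeight_nonneg s b X) (by positivity)
  have hint1 : Integrable (G.indicator (fun _ => k * q^2)) volume :=
    (IntegrableOn.integrable_indicator
      (integrableOn_const (isCompact_box _ _).measure_lt_top.ne)
      (measurableSet_box _ _))
  have hint2 : Integrable
      (fun X : Spc m => waveWeight (n := m+1) s b X * ‖((theta m l X : ℝ) : ℂ)‖^2) volume := by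
    apply Continuous.integrable_of_hasCompactSupport
    · exact (waveWeight_continuous s b).mul
        (((Complex.continuous_ofReal.comp (theta_contDiff hl0).continuous).norm).pow 2)
    · apply HasCompactSupport.mul_left
      apply HasCompactSupport.comp_left (g := fun r : ℂ => ‖r‖^2) ?_ (by simp)
      exact (theta_hcs hl0).comp_left (g := fun r : ℝ => (r : ℂ)) (by simp)
  calc k * q^2 * (volume G).toReal
      = ∫ X : Spc m, G.indicator (fun _ => k * q^2) X := by
        rw [integral_indicator_const _ (measurableSet_box _ _)]
        simp [mul_comm, measureReal_def, hG]
    _ ≤ _ := integral_mono hint1 hint2 hpt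

end Stage5

end PNL

/-- necessity of a condition for the product estimate
`‖uv‖_{H^{−s₀,−b₀}} ≤ C ‖u‖_{H^{s₁,b₁}} ‖v‖_{H^{s₂,b₂}}` on `ℝ^{1+n}`. -/
theorem product_necessary_lorentz (n : ℕ) (hn : 1 ≤ n) (s₀ s₁ s₂ b₀ b₁ b₂ : ℝ)
    (h : ∃ C : ℝ, ∀ u v : SchwartzMap (EuclideanSpace ℝ (Fin (n + 1))) ℂ,
      waveSobolevNorm n (-s₀) (-b₀) (fun X => u X * v X) ≤
        C * waveSobolevNorm n s₁ b₁ u * waveSobolevNorm n s₂ b₂ v) :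
    s₀ + s₁ + s₂ ≥ ((n : ℝ) + 1) / 4 := by
  open PNL in
  obtain ⟨m, rfl⟩ : ∃ m, n = m + 1 := ⟨n - 1, by omega⟩
  by_contra hcon
  push_neg at hcon
  obtain ⟨C, hC⟩ := h
  -- abbreviations for the constants
  set σ := s₀ + s₁ + s₂ with hσ
  set K1 := max ((4:ℝ)⁻¹ ^ s₁) ((50:ℝ) ^ s₁) * max 1 ((1+((m:ℝ)+5)^2) ^ b₁) with hK1
  set K2 := max ((4:ℝ)⁻¹ ^ s₂) ((50:ℝ) ^ s₂) * max 1 ((1+((m:ℝ)+5)^2) ^ b₂) with hK2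
  set k0 := min ((4:ℝ)⁻¹ ^ (-s₀)) ((50:ℝ) ^ (-s₀)) * min 1 ((1+((m:ℝ)+5)^2) ^ (-b₀)) with hk0
  have hK1pos : 0 < K1 :=
    mul_pos (lt_max_of_lt_left (Real.rpow_pos_of_pos (by norm_num) s₁))
      (lt_max_of_lt_left one_pos)
  have hK2pos : 0 < K2 :=
    mul_pos (lt_max_of_lt_left (Real.rpow_pos_of_pos (by norm_num) s₂))
      (lt_max_of_lt_left one_pos)
  have hk0pos : 0 < k0 :=
    mul_pos (lt_min (Real.rpow_pos_of_pos (by norm_num) _)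
        (Real.rpow_pos_of_pos (by norm_num) _))
      (lt_min one_pos (Real.rpow_pos_of_pos (by positivity) _))
  set c1 := ((1:ℝ)/2)^(3*(m+2)) with hc1
  have hc1pos : 0 < c1 := by positivity
  set E := |C|^2 * (K1 * K2) * ((2:ℝ)^(m+2))^2 with hE
  have hEnn : 0 ≤ E := by positivity
  set D := E / (k0 * c1) with hD
  have hDnn : 0 ≤ D := div_nonneg hEnn (by positivity)
  set e := ((m:ℝ)+2)/2 - 2*σ with he'
  have he : 0 < e := by
    have : σ < ((m:ℝ)+2)/4 := by push_cast at hcon ⊢; linarith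
    rw [he']; linarith
  -- the scale parameter
  set l := max 8 (max ((m:ℝ)+2) ((D+1) ^ e⁻¹)) with hldef
  have hl8 : (8:ℝ) ≤ l := le_max_left _ _
  have hm2 : (m:ℝ)+2 ≤ l := le_trans (le_max_left _ _) (le_max_right _ _)
  have hlD : (D+1) ^ e⁻¹ ≤ l := le_trans (le_max_right _ _) (le_max_right _ _)
  have hl0 : (0:ℝ) < l := by linarith
  -- the test function
  have hφcontℂ : Continuous fun X : Spc m => ((phi m l X : ℝ) : ℂ) :=
    Complex.continuous_ofReal.comp (phi_continuous l)
  have hφhcsℂ : HasCompactSupport fun X : Spc m => ((phi m l X : ℝ) : ℂ) :=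
    (phi_hcs hl0).comp_left (g := fun r : ℝ => (r : ℂ)) (by simp)
  have hφsm : ContDiff ℝ ∞ fun X : Spc m => ((phi m l X : ℝ) : ℂ) :=
    Complex.ofRealCLM.contDiff.comp (phi_contDiff l)
  have hθhcsℂ : HasCompactSupport fun X : Spc m => ((theta m l X : ℝ) : ℂ) :=
    (theta_hcs hl0).comp_left (g := fun r : ℝ => (r : ℂ)) (by simp)
  have hθsm : ContDiff ℝ ∞ fun X : Spc m => ((theta m l X : ℝ) : ℂ) :=
    Complex.ofRealCLM.contDiff.comp (theta_contDiff hl0)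
  set Φ : SchwartzMap (Spc m) ℂ := mkS _ hφsm hφhcsℂ with hΦ
  set Θ : SchwartzMap (Spc m) ℂ := mkS _ hθsm hθhcsℂ with hΘ
  set u : SchwartzMap (Spc m) ℂ := (FourierTransform.fourierCLE ℂ (𝓢(Spc m, ℂ))).symm Φ with hu
  -- Fourier identities
  have hFu : 𝓕 ⇑u = fun X : Spc m => ((phi m l X : ℝ) : ℂ) := by
    rw [← SchwartzMap.fourier_coe, ← FourierTransform.fourierCLE_apply (R := ℂ) u, hu,
      (FourierTransform.fourierCLE ℂ (𝓢(Spc m, ℂ))).apply_symm_apply Φ]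
    rfl
  have hΘfun : ⇑Θ = fun z : Spc m =>
      ∫ y, ((phi m l y : ℝ):ℂ) * ((phi m l (z - y) : ℝ):ℂ) := by
    funext z
    show ((theta m l z : ℝ):ℂ) = ∫ y, ((phi m l y : ℝ):ℂ) * ((phi m l (z - y) : ℝ):ℂ)
    calc ((theta m l z : ℝ):ℂ) = ((∫ y, phi m l y * phi m l (z - y) : ℝ) : ℂ) := rfl
      _ = ∫ y, ((phi m l y * phi m l (z - y) : ℝ) : ℂ) := integral_ofReal.symm
      _ = ∫ y, ((phi m l y : ℝ):ℂ) * ((phi m l (z - y) : ℝ):ℂ) := by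
          congr 1; funext y; push_cast; ring
  have huv : (fun X => (⇑u) X * (⇑u) X) = ⇑((FourierTransform.fourierCLE ℂ (𝓢(Spc m, ℂ))).symm Θ) := by
    have hu' : ⇑u = 𝓕⁻ ⇑Φ := by
      rw [hu, FourierTransform.fourierCLE_symm_apply, SchwartzMap.fourierInv_coe]
    have hΘ' : ⇑((FourierTransform.fourierCLE ℂ (𝓢(Spc m, ℂ))).symm Θ) = 𝓕⁻ ⇑Θ :=
      by rw [FourierTransform.fourierCLE_symm_apply, SchwartzMap.fourierInv_coe]
    funext X
    rw [hu', hΘ', hΘfun]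
    exact (fourierInv_conv _ _ hφcontℂ hφhcsℂ hφcontℂ hφhcsℂ X).symm
  have hFuv : 𝓕 (fun X => (⇑u) X * (⇑u) X) = fun X : Spc m => ((theta m l X : ℝ) : ℂ) := by
    rw [huv, ← SchwartzMap.fourier_coe, ← FourierTransform.fourierCLE_apply (R := ℂ)
      ((FourierTransform.fourierCLE ℂ (𝓢(Spc m, ℂ))).symm Θ),
      (FourierTransform.fourierCLE ℂ (𝓢(Spc m, ℂ))).apply_symm_apply Θ]
    rfl
  -- volumes
  set P := l * Real.sqrt l ^ m with hP
  have hPpos : 0 < P := mul_pos hl0 (pow_pos (Real.sqrt_pos.mpr hl0) m)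
  have hrad1 : (fun i : Fin (m+2) => rad m l i * 1) = rad m l := by funext i; ring
  have hrad4 : (fun i : Fin (m+2) => rad m l i / 4) = fun i => rad m l i * (1/4) := by
    funext i; ring
  have hVS : (volume (box (ctr m l) (rad m l))).toReal = 2^(m+2) * P := by
    have h := vol_box_toReal hl0 (ctr m l) 1 one_pos
    rw [hrad1] at h
    simpa using h
  have hVG : (volume (box (fun i => 2 * ctr m l i) (fun i => rad m l i / 4))).toReal
      = ((1:ℝ)/2)^(m+2) * P := by
    have h := vol_box_toReal hl0 (fun i => 2 * ctr m l i) (1/4) (by norm_num)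
    rw [← hrad4] at h
    rw [h]; norm_num [hP]
  have hVq : (volume (box (ctr m l) (fun i => rad m l i / 4))).toReal
      = ((1:ℝ)/2)^(m+2) * P := by
    have h := vol_box_toReal hl0 (ctr m l) (1/4) (by norm_num)
    rw [← hrad4] at h
    rw [h]; norm_num [hP]
  -- norm bounds
  have hN1 : waveSobolevNorm (m+1) s₁ b₁ ⇑u ≤
      (K1 * (l^2) ^ s₁ * (2^(m+2) * P)) ^ (1/2:ℝ) := by
    rw [waveSobolevNorm, hFu]
    apply Real.rpow_le_rpow
      (integral_nonneg fun X => mul_nonneg (waveWeight_nonneg _ _ _) (by positivity))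
      ?_ (by norm_num)
    calc _ ≤ (K1 * (l^2) ^ s₁) * (volume (box (ctr m l) (rad m l))).toReal :=
          integral_phi_le hl8 hm2 s₁ b₁
      _ = K1 * (l^2) ^ s₁ * (2^(m+2) * P) := by rw [hVS]
  have hN2 : waveSobolevNorm (m+1) s₂ b₂ ⇑u ≤
      (K2 * (l^2) ^ s₂ * (2^(m+2) * P)) ^ (1/2:ℝ) := by
    rw [waveSobolevNorm, hFu]
    apply Real.rpow_le_rpow
      (integral_nonneg fun X => mul_nonneg (waveWeight_nonneg _ _ _) (by positivity))
      ?_ (by norm_num)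
    calc _ ≤ (K2 * (l^2) ^ s₂) * (volume (box (ctr m l) (rad m l))).toReal :=
          integral_phi_le hl8 hm2 s₂ b₂
      _ = K2 * (l^2) ^ s₂ * (2^(m+2) * P) := by rw [hVS]
  have hN0 : ((k0 * (l^2) ^ (-s₀)) * (((1:ℝ)/2)^(m+2) * P)^2 * (((1:ℝ)/2)^(m+2) * P)) ^ (1/2:ℝ)
      ≤ waveSobolevNorm (m+1) (-s₀) (-b₀) (fun X => (⇑u) X * (⇑u) X) := by
    rw [waveSobolevNorm, hFuv]
    apply Real.rpow_le_rpow ?_ ?_ (by norm_num)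
    · apply mul_nonneg (mul_nonneg (mul_nonneg hk0pos.le
        (Real.rpow_nonneg (by positivity) _)) (by positivity)) (by positivity)
    · calc (k0 * (l^2) ^ (-s₀)) * (((1:ℝ)/2)^(m+2) * P)^2 * (((1:ℝ)/2)^(m+2) * P)
          = (k0 * (l^2) ^ (-s₀)) *
            ((volume (box (ctr m l) (fun i => rad m l i / 4))).toReal)^2 *
            (volume (box (fun i => 2 * ctr m l i) (fun i => rad m l i / 4))).toReal := by
            rw [hVq, hVG]
        _ ≤ _ := by
            have := integral_theta_ge (m := m) hl8 hm2 (-s₀) (-b₀)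
            calc _ ≤ _ := by
                  apply mul_le_mul_of_nonneg_right ?_ ENNReal.toReal_nonneg
                  apply mul_le_mul_of_nonneg_right ?_ (by positivity)
                  exact le_refl _
              _ ≤ _ := this
  -- norms are nonnegative
  have hN1nn : 0 ≤ waveSobolevNorm (m+1) s₁ b₁ ⇑u :=
    Real.rpow_nonneg (integral_nonneg fun X =>
      mul_nonneg (waveWeight_nonneg _ _ _) (by positivity)) _
  have hN2nn : 0 ≤ waveSobolevNorm (m+1) s₂ b₂ ⇑u :=
    Real.rpow_nonneg (integral_nonneg fun X =>
      mul_nonneg (waveWeight_nonneg _ _ _) (by positivity)) _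
  -- apply the hypothesis
  have hchain := hC u u
  set X0 := (k0 * (l^2) ^ (-s₀)) * (((1:ℝ)/2)^(m+2) * P)^2 * (((1:ℝ)/2)^(m+2) * P) with hX0
  have hX0nn : 0 ≤ X0 := by
    apply mul_nonneg (mul_nonneg (mul_nonneg hk0pos.le
      (Real.rpow_nonneg (by positivity) _)) (by positivity)) (by positivity)
  set Y1 := K1 * (l^2) ^ s₁ * (2^(m+2) * P) with hY1
  set Y2 := K2 * (l^2) ^ s₂ * (2^(m+2) * P) with hY2
  have hY1nn : 0 ≤ Y1 := by
    apply mul_nonneg (mul_nonneg hK1pos.le (Real.rpow_nonneg (by positivity) _)) (by positivity)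
  have hY2nn : 0 ≤ Y2 := by
    apply mul_nonneg (mul_nonneg hK2pos.le (Real.rpow_nonneg (by positivity) _)) (by positivity)
  have hstep : X0 ^ (1/2:ℝ) ≤ |C| * (Y1 ^ (1/2:ℝ) * Y2 ^ (1/2:ℝ)) := by
    calc X0 ^ (1/2:ℝ) ≤ C * waveSobolevNorm (m+1) s₁ b₁ ⇑u * waveSobolevNorm (m+1) s₂ b₂ ⇑u :=
          le_trans hN0 hchain
      _ ≤ |C| * waveSobolevNorm (m+1) s₁ b₁ ⇑u * waveSobolevNorm (m+1) s₂ b₂ ⇑u := by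
          apply mul_le_mul_of_nonneg_right ?_ hN2nn
          exact mul_le_mul_of_nonneg_right (le_abs_self C) hN1nn
      _ ≤ |C| * (Y1 ^ (1/2:ℝ)) * (Y2 ^ (1/2:ℝ)) := by
          apply mul_le_mul ?_ hN2 hN2nn (by positivity)
          exact mul_le_mul_of_nonneg_left hN1 (abs_nonneg C)
      _ = |C| * (Y1 ^ (1/2:ℝ) * Y2 ^ (1/2:ℝ)) := by ring
  -- square the inequality
  have hsq_id : ∀ x : ℝ, 0 ≤ x → (x ^ (1/2:ℝ))^2 = x := by
    intro x hx
    rw [← Real.rpow_natCast (x ^ (1/2:ℝ)) 2, ← Real.rpow_mul hx]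
    norm_num
  have hsq : X0 ≤ |C|^2 * (Y1 * Y2) := by
    have h2 := pow_le_pow_left₀ (Real.rpow_nonneg hX0nn _) hstep 2
    rw [hsq_id X0 hX0nn] at h2
    calc X0 ≤ (|C| * (Y1 ^ (1/2:ℝ) * Y2 ^ (1/2:ℝ)))^2 := h2
      _ = |C|^2 * ((Y1 ^ (1/2:ℝ))^2 * (Y2 ^ (1/2:ℝ))^2) := by ring
      _ = |C|^2 * (Y1 * Y2) := by rw [hsq_id Y1 hY1nn, hsq_id Y2 hY2nn]
  -- rewrite powers of l
  have hA : ∀ s : ℝ, ((l^2 : ℝ) ^ s) = l ^ (2*s) := by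
    intro s
    rw [← Real.rpow_natCast l 2, ← Real.rpow_mul hl0.le]
    norm_num
  -- derive P ≤ D * l ^ (2σ)
  have hmain : k0 * (l ^ (2*s₀))⁻¹ * c1 * P^3 ≤ E * l ^ (2*s₁ + 2*s₂) * P^2 := by
    have hexp : l ^ (2*s₁ + 2*s₂) = l ^ (2*s₁) * l ^ (2*s₂) := Real.rpow_add hl0 _ _
    have hneg : (l^2 : ℝ) ^ (-s₀) = (l ^ (2*s₀))⁻¹ := by
      rw [hA (-s₀), show 2*(-s₀) = -(2*s₀) by ring, Real.rpow_neg hl0.le]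
    calc k0 * (l ^ (2*s₀))⁻¹ * c1 * P^3
        = X0 := by
          rw [hX0, ← hneg, hc1]
          ring
      _ ≤ |C|^2 * (Y1 * Y2) := hsq
      _ = E * l ^ (2*s₁ + 2*s₂) * P^2 := by
          rw [hY1, hY2, hE, hA s₁, hA s₂, hexp]
          ring
  have hPle : P ≤ D * l ^ (2*σ) := by
    have hl2s₀ : (0:ℝ) < l ^ (2*s₀) := Real.rpow_pos_of_pos hl0 _
    have hfac : (0:ℝ) < l ^ (2*s₀) / (k0 * c1 * P^2) := by positivity
    have h3 := mul_le_mul_of_nonneg_right hmain hfac.le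
    have hL : k0 * (l ^ (2*s₀))⁻¹ * c1 * P^3 * (l ^ (2*s₀) / (k0 * c1 * P^2)) = P := by
      field_simp
    have hR : E * l ^ (2*s₁ + 2*s₂) * P^2 * (l ^ (2*s₀) / (k0 * c1 * P^2))
        = D * (l ^ (2*s₀) * l ^ (2*s₁ + 2*s₂)) := by
      rw [hD]
      field_simp
    rw [hL, hR] at h3
    have : l ^ (2*s₀) * l ^ (2*s₁ + 2*s₂) = l ^ (2*σ) := by
      rw [← Real.rpow_add hl0, hσ]
      ring_nf
    rwa [this] at h3
  -- P = l ^ ((m+2)/2)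
  have hPval : P = l ^ (((m:ℝ)+2)/2) := by
    rw [hP, Real.sqrt_eq_rpow, ← Real.rpow_natCast (l ^ ((1:ℝ)/2)) m,
      ← Real.rpow_mul hl0.le]
    nth_rewrite 1 [← Real.rpow_one l]
    rw [← Real.rpow_add hl0]
    congr 1
    push_cast
    ring
  -- final contradiction
  have hsplit : l ^ (((m:ℝ)+2)/2) = l ^ (2*σ) * l ^ e := by
    rw [← Real.rpow_add hl0, he']
    congr 1
    ring
  have hle : l ^ e ≤ D := by
    have h4 : l ^ (2*σ) * l ^ e ≤ D * l ^ (2*σ) := by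
      rw [← hsplit, ← hPval]; exact hPle
    have h5 : (0:ℝ) < l ^ (2*σ) := Real.rpow_pos_of_pos hl0 _
    rw [mul_comm D _] at h4
    exact le_of_mul_le_mul_left h4 h5
  have hge : D + 1 ≤ l ^ e := by
    calc D + 1 = (D+1) ^ (e⁻¹ * e) := by
          rw [inv_mul_cancel₀ he.ne', Real.rpow_one]
      _ = ((D+1) ^ e⁻¹) ^ e := Real.rpow_mul (by linarith) _ _
      _ ≤ l ^ e := Real.rpow_le_rpow (Real.rpow_nonneg (by linarith) _) hlD he.le
  linarith
end
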